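/- arXiv:2605.29735 — 11 statements merged into one kernel-verified Lean document; each statement's English description precedes it below -/
import Mathlib

section
/- If G = ⊕_{i∈I} G_i where each G_i is a fully invariant subgroup of G, φ is an endomorphism of G, and n is an SH-exponent for the restriction of φ to each G_i, then n is an SH-exponent for φ. -/
/-! `n` is an SH-exponent for `φ` on a subgroup `S` exactly when `φⁿ⁺¹ x = 0` forces `φⁿ x = 0`
for `x ∈ S`. Each summand is invariant under `φⁿ⁺¹`, so for `x = ∑ xᵢ` the equation
`φⁿ⁺¹ x = ∑ φⁿ⁺¹ xᵢ = 0` splits, by independence, into `φⁿ⁺¹ xᵢ = 0` for every `i`; the hypothesis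
on the summands then gives `φⁿ xᵢ = 0`, hence `φⁿ x = 0`. -/

theorem iSupIndep.iSup_inf_ker_le {ι R M : Type*} [Ring R] [AddCommGroup M] [Module R M]
    {p : ι → Submodule R M} (hp : iSupIndep p) (f : M →ₗ[R] M)
    (hf : ∀ i, ∀ x ∈ p i, f x ∈ p i) :
    (⨆ i, p i) ⊓ LinearMap.ker f ≤ ⨆ i, p i ⊓ LinearMap.ker f := by
  rintro m ⟨hmp, hm⟩
  obtain ⟨v, hv, rfl⟩ := (Submodule.mem_iSup_iff_exists_finsupp _ _).mp hmp
  have hfv : ∀ i ∈ v.support, f (v i) = 0 :=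
    (iSupIndep_iff_finsetSum_eq_zero_imp_eq_zero p).mp hp v.support (fun i => f (v i))
      (fun i _ => hf i _ (hv i)) (by simpa [Finsupp.sum, map_sum] using hm)
  refine (Submodule.mem_iSup_iff_exists_finsupp _ _).mpr ⟨v, fun i => ⟨hv i, ?_⟩, rfl⟩
  by_cases hi : i ∈ v.support
  · exact hfv i hi
  · simp [Finsupp.notMem_support_iff.mp hi]

theorem iSupIndep.addSubgroup_iSup_inf_ker_le {ι G : Type*} [AddCommGroup G]
    {A : ι → AddSubgroup G} (hA : iSupIndep A) (ψ : G →+ G) (hψ : ∀ i, (A i).map ψ ≤ A i) :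
    (⨆ i, A i) ⊓ ψ.ker ≤ ⨆ i, A i ⊓ ψ.ker := by
  have := ((iSupIndep_map_orderIso_iff AddSubgroup.toIntSubmodule).mpr hA).iSup_inf_ker_le
    ψ.toIntLinearMap (fun i x hx => hψ i ⟨x, hx, rfl⟩)
  rw [← AddSubgroup.toIntSubmodule.le_iff_le]
  simpa [map_iSup, map_inf] using this

theorem AddMonoid.End.injOn_image_pow_iff {G : Type*} [AddGroup G] (φ : AddMonoid.End G) (n : ℕ)
    (S : AddSubgroup G) :
    Set.InjOn φ ((φ ^ n : G →+ G) '' S) ↔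
      S ⊓ (φ ^ (n + 1) : G →+ G).ker ≤ (φ ^ n : G →+ G).ker := by
  have hpow : ∀ x, (φ ^ (n + 1) : G →+ G) x = φ ((φ ^ n : G →+ G) x) := fun x => by
    rw [pow_succ']; rfl
  constructor
  · rintro h x ⟨hxS, hx : (φ ^ (n + 1) : G →+ G) x = 0⟩
    refine h ⟨x, hxS, rfl⟩ ⟨0, S.zero_mem, map_zero _⟩ ?_
    rwa [← hpow, map_zero]
  · rintro h _ ⟨a, ha, rfl⟩ _ ⟨b, hb, rfl⟩ hab
    rw [← sub_eq_zero, ← map_sub]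
    refine h ⟨S.sub_mem ha hb, ?_⟩
    show (φ ^ (n + 1) : G →+ G) (a - b) = 0
    rw [map_sub, hpow, hpow, hab, sub_self]

theorem stmt3 {G : Type*} [AddCommGroup G] {I : Type*} (A : I → AddSubgroup G)
    (hindep : iSupIndep A) (hsup : ⨆ i, A i = ⊤)
    (hfi : ∀ i, ∀ ψ : AddMonoid.End G, (A i).map (ψ : G →+ G) ≤ A i)
    (φ : AddMonoid.End G) (n : ℕ)
    (hexp : ∀ i, Set.InjOn (φ : G → G) ((φ ^ n : G →+ G) '' (A i : Set G))) :
    Set.InjOn (φ : G → G) (Set.range (φ ^ n : G →+ G)) := by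
  have hker := hindep.addSubgroup_iSup_inf_ker_le (φ ^ (n + 1)) (fun i => hfi i _)
  rw [hsup] at hker
  rw [← Set.image_univ, ← AddSubgroup.coe_top, φ.injOn_image_pow_iff]
  exact hker.trans (iSup_le fun i => (φ.injOn_image_pow_iff n (A i)).mp (hexp i))
end

section
/- If G is a uniformly strongly Hopfian abelian group, then its torsion subgroup T is strongly Hopfian. -/
/-- An abelian group is strongly Hopfian if for every endomorphism `φ`,
the ascending chain `ker φ ≤ ker φ² ≤ …` is eventually stationary. -/
def StronglyHopfian (G : Type*) [AddCommGroup G] : Prop :=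
  ∀ φ : AddMonoid.End G, ∃ n : ℕ, ∀ m : ℕ, n ≤ m →
    AddMonoidHom.ker (φ ^ m : G →+ G) = AddMonoidHom.ker (φ ^ n : G →+ G)

/-- Uniformly strongly Hopfian: a single `n` works as SH-exponent
for all endomorphisms. -/
def UniformlyStronglyHopfian (G : Type*) [AddCommGroup G] : Prop :=
  ∃ n : ℕ, ∀ φ : AddMonoid.End G,
    Set.InjOn (φ : G → G) (Set.range (φ ^ n : G →+ G))

/-!
Let `n` be the uniform exponent. Every endomorphism `φ` of `G` then has `ker φ^(n+1) = ker φ^n`;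
for multiplication by a prime `p` this says that the `p`-primary part of `G` is `G[p^n]`. So
`G[p^n]` is bounded and `G / G[p^n]` has no `p`-torsion, which makes it a direct summand of `G`
(Kulikov). An endomorphism `ψ` of `T` maps `G[p^n] ⊆ T` to itself, and `ψ` composed with the
projection onto `G[p^n]` is an endomorphism of `G` whose kernel chain controls that of `ψ` on
`p`-primary elements. Every torsion element is a sum of `p`-primary multiples of itself.
-/

open Pointwise Submodule

section Kulikov

variable {R M : Type*} [CommRing R] [IsBezout R] [AddCommGroup M] [Module R M] {p : R}

theorem exists_disjoint_sup_eq_of_disjoint_smul (hp : Irreducible p) {A B : Submodule R M}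
    (hBA : B ≤ A) (hB : Disjoint B (p • A)) : ∃ C, Disjoint B C ∧ B ⊔ C = A := by
  set S : Set (Submodule R M) := {C | C ≤ A ∧ p • A ≤ C ∧ Disjoint B C}
  have hchain : ∀ c ⊆ S, IsChain (· ≤ ·) c → ∀ y ∈ c, ∃ ub ∈ S, ∀ z ∈ c, z ≤ ub := by
    intro c hcS hc y hy
    refine ⟨sSup c, ⟨sSup_le fun z hz => (hcS hz).1, (hcS hy).2.1.trans (le_sSup hy), ?_⟩,
      fun z hz => le_sSup hz⟩
    rw [disjoint_def]
    intro x hxB hxc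
    obtain ⟨z, hz, hxz⟩ := (mem_sSup_of_directed ⟨y, hy⟩ hc.directedOn).1 hxc
    exact disjoint_def.1 (hcS hz).2.2 x hxB hxz
  obtain ⟨C, -, ⟨hCA, hpAC, hBC⟩, hCmax⟩ :=
    zorn_le_nonempty₀ S hchain (p • A) ⟨smul_le_self_of_tower p A, le_rfl, hB⟩
  refine ⟨C, hBC, le_antisymm (sup_le hBA hCA) fun a ha => ?_⟩
  -- if `a ∉ B ⊔ C`, then `C ⊔ ⟨a⟩` meets `B` in some `c + r • a ≠ 0`; `p ∣ r` would put it in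
  -- `C`, and otherwise Bézout for `p` and `r` puts `a` in `B ⊔ C`
  by_contra haBC
  set C' := C ⊔ span R {a}
  have hCC' : ¬Disjoint B C' := fun h => haBC <| mem_sup_right <|
    hCmax ⟨sup_le hCA (span_le.2 (by simpa using ha)), hpAC.trans le_sup_left, h⟩ le_sup_left
      (mem_sup_right (mem_span_singleton_self a))
  simp only [disjoint_def, not_forall] at hCC'
  obtain ⟨b, hbB, hbC', hb0⟩ := hCC'
  obtain ⟨c, hc, _, hra, rfl⟩ := mem_sup.1 hbC'
  obtain ⟨r, rfl⟩ := mem_span_singleton.1 hra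
  rcases dvd_or_isCoprime p r hp with ⟨s, rfl⟩ | ⟨u, v, huv⟩
  · refine hb0 (disjoint_def.1 hBC _ hbB (add_mem hc (hpAC ?_)))
    rw [mul_smul]
    exact smul_mem_pointwise_smul _ p A (A.smul_mem s ha)
  · refine haBC ?_
    have hra : r • a = (c + r • a) - c := by abel
    rw [← one_smul R a, ← huv, add_smul, mul_smul, mul_smul, hra]
    exact add_mem (mem_sup_right (C.smul_mem u (hpAC (smul_mem_pointwise_smul _ p A ha))))
      (smul_mem _ v (sub_mem (mem_sup_left hbB) (mem_sup_right hc)))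

theorem exists_disjoint_sup_eq_of_pow_smul_eq_zero (hp : Irreducible p) (n : ℕ)
    {A B : Submodule R M} (hBA : B ≤ A) (hB : ∀ b ∈ B, p ^ n • b = 0)
    (hpure : ∀ a ∈ A, p • a ∈ B → a ∈ B) : ∃ C, Disjoint B C ∧ B ⊔ C = A := by
  induction n generalizing A B with
  | zero =>
    have : B = ⊥ := eq_bot_iff.2 fun b hb => by simpa using hB b hb
    exact ⟨A, by simp [this], by simp [this]⟩
  | succ n ih =>
    have hpB : ∀ b ∈ p • B, p ^ n • b = 0 := by
      intro x hx
      obtain ⟨b, hb, rfl⟩ := (mem_smul_pointwise_iff_exists _ _ _).1 hx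
      rw [smul_smul, ← pow_succ]
      exact hB b hb
    have hpure_pA : ∀ a ∈ p • A, p • a ∈ p • B → a ∈ p • B := by
      intro x hx hpx
      obtain ⟨a, ha, rfl⟩ := (mem_smul_pointwise_iff_exists _ _ _).1 hx
      obtain ⟨b, hb, hpb⟩ := (mem_smul_pointwise_iff_exists _ _ _).1 hpx
      have hpa : p • a ∈ B := hpure _ (A.smul_mem p ha) (hpb ▸ B.smul_mem p hb)
      exact smul_mem_pointwise_smul _ _ _ (hpure a ha hpa)
    obtain ⟨H, hBH, hBH_sup⟩ := ih (smul_le_smul_left p hBA) hpB hpure_pA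
    -- the complement `H` of `p • B` in `p • A` pulls back to `K = A ⊓ p⁻¹ H`, in which
    -- the socle `B[p]` is complemented by the elementary case
    set K := A ⊓ H.comap (LinearMap.lsmul R M p)
    set Bp := B ⊓ LinearMap.ker (LinearMap.lsmul R M p)
    have hmemK : ∀ x, x ∈ K ↔ x ∈ A ∧ p • x ∈ H := fun x => by simp [K]
    have hmemBp : ∀ x, x ∈ Bp ↔ x ∈ B ∧ p • x = 0 := fun x => by simp [Bp]
    have hBpK : Bp ≤ K := fun x hx => by
      rw [hmemBp] at hx
      rw [hmemK, hx.2]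
      exact ⟨hBA hx.1, H.zero_mem⟩
    have hBp_pK : Disjoint Bp (p • K) := by
      rw [disjoint_def]
      intro x hx hxK
      obtain ⟨k, hk, rfl⟩ := (mem_smul_pointwise_iff_exists _ _ _).1 hxK
      rw [hmemK] at hk
      have hkB : k ∈ B := hpure k hk.1 ((hmemBp _).1 hx).1
      exact disjoint_def.1 hBH _ (smul_mem_pointwise_smul _ _ _ hkB) hk.2
    obtain ⟨C, hBpC, hBpC_sup⟩ := exists_disjoint_sup_eq_of_disjoint_smul hp hBpK hBp_pK
    have hCK : C ≤ K := hBpC_sup ▸ le_sup_right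
    refine ⟨C, disjoint_def.2 fun x hxB hxC => ?_, le_antisymm (sup_le hBA ?_) fun a ha => ?_⟩
    · have hpx : p • x = 0 := disjoint_def.1 hBH _ (smul_mem_pointwise_smul _ _ _ hxB)
        ((hmemK x).1 (hCK hxC)).2
      exact disjoint_def.1 hBpC x ((hmemBp x).2 ⟨hxB, hpx⟩) hxC
    · exact hCK.trans inf_le_left
    · have hpa : p • a ∈ p • B ⊔ H := hBH_sup ▸ smul_mem_pointwise_smul _ _ _ ha
      obtain ⟨_, hb', h, hh, hpa_eq⟩ := mem_sup.1 hpa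
      obtain ⟨b, hb, rfl⟩ := (mem_smul_pointwise_iff_exists _ _ _).1 hb'
      have habK : a - b ∈ Bp ⊔ C := by
        rw [hBpC_sup, hmemK, smul_sub, ← hpa_eq, add_sub_cancel_left]
        exact ⟨sub_mem ha (hBA hb), hh⟩
      rw [← add_sub_cancel b a]
      exact add_mem (mem_sup_left hb) (sup_le_sup_right inf_le_left C habK)

end Kulikov

section Endomorphisms

variable {M : Type*} [AddCommGroup M]

theorem pow_apply_eq_zero_of_injOn {φ : AddMonoid.End M} {n : ℕ}
    (h : Set.InjOn φ (Set.range (φ ^ n : M →+ M))) {x : M} (hx : (φ ^ (n + 1)) x = 0) :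
    (φ ^ n) x = 0 := by
  refine h ⟨x, rfl⟩ ⟨0, map_zero _⟩ ?_
  rw [map_zero, ← hx, pow_succ']
  rfl

theorem pow_add_apply_eq_zero_iff {φ : AddMonoid.End M} {n : ℕ}
    (h : ∀ x, (φ ^ (n + 1)) x = 0 → (φ ^ n) x = 0) (j : ℕ) (x : M) :
    (φ ^ (n + j)) x = 0 ↔ (φ ^ n) x = 0 := by
  induction j generalizing x with
  | zero => rfl
  | succ j ih =>
    simp only [AddMonoid.End.coe_pow] at h ih ⊢
    rw [← ih x, show n + (j + 1) = n + 1 + j by omega, Function.iterate_add_apply _ (n + 1) j,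
      Function.iterate_add_apply _ n j]
    exact ⟨h _, fun hy => by rw [Function.iterate_succ_apply', hy, map_zero]⟩

theorem ker_pow_eq_of_pow_succ_apply_eq_zero {φ : AddMonoid.End M} {n : ℕ}
    (h : ∀ x, (φ ^ (n + 1)) x = 0 → (φ ^ n) x = 0) {m : ℕ} (hm : n ≤ m) :
    AddMonoidHom.ker (φ ^ m : M →+ M) = AddMonoidHom.ker (φ ^ n : M →+ M) := by
  obtain ⟨j, rfl⟩ := Nat.exists_eq_add_of_le hm
  ext x
  exact pow_add_apply_eq_zero_iff h j x

variable {n : ℕ} (hM : ∀ (φ : AddMonoid.End M) (x : M), (φ ^ (n + 1)) x = 0 → (φ ^ n) x = 0)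
include hM

theorem pow_smul_eq_zero_of_pow_succ_apply_eq_zero (k : ℤ) {m : ℕ} {x : M}
    (hx : k ^ m • x = 0) : k ^ n • x = 0 := by
  have hk : ∀ i, ((k : AddMonoid.End M) ^ i) x = k ^ i • x := fun i => by
    rw [← Int.cast_pow, AddMonoid.End.intCast_apply]
  rw [← hk, ← pow_add_apply_eq_zero_iff (hM _) m, hk, pow_add, mul_smul, hx, smul_zero]

theorem exists_isCompl_torsionBy_prime_pow {p : ℕ} (hp : p.Prime) :
    ∃ C : Submodule ℤ M, IsCompl (torsionBy ℤ M ((p : ℤ) ^ n)) C := by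
  obtain ⟨C, hBC, hBC_sup⟩ := exists_disjoint_sup_eq_of_pow_smul_eq_zero
    (Nat.prime_iff_prime_int.1 hp).irreducible n (B := torsionBy ℤ M ((p : ℤ) ^ n)) le_top
    (fun b hb => (mem_torsionBy_iff _ _).1 hb) fun g _ hg => by
      rw [mem_torsionBy_iff, smul_smul, ← pow_succ] at hg
      exact (mem_torsionBy_iff _ _).2 (pow_smul_eq_zero_of_pow_succ_apply_eq_zero hM _ hg)
  exact ⟨C, hBC, codisjoint_iff.2 hBC_sup⟩

theorem pow_apply_eq_zero_of_leftInvOn {S : Type*} [AddCommGroup S] (ψ : AddMonoid.End S)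
    {B : Set S} (hψB : Set.MapsTo ψ B B) {ι : S →+ M} (hι : Function.Injective ι) {π : M →+ S}
    (hπ : ∀ b ∈ B, π (ι b) = b) {x : S} (hxB : x ∈ B) (hx : (ψ ^ (n + 1)) x = 0) :
    (ψ ^ n) x = 0 := by
  set φ : AddMonoid.End M := ι.comp (ψ.comp π)
  have hφ : ∀ k, (φ ^ k) (ι x) = ι ((ψ ^ k) x) := by
    intro k
    simp only [AddMonoid.End.coe_pow]
    induction k with
    | zero => rfl
    | succ k ih =>
      rw [Function.iterate_succ_apply', Function.iterate_succ_apply', ih]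
      change ι (ψ (π (ι _))) = _
      rw [hπ _ (hψB.iterate k hxB)]
  apply hι
  rw [← hφ, hM φ (ι x) (by rw [hφ, hx, map_zero]), map_zero]

end Endomorphisms

theorem AddSubgroup.le_of_forall_prime_pow_nsmul_eq_zero {M : Type*} [AddCommGroup M]
    {H K : AddSubgroup M} (hH : ∀ x ∈ H, IsOfFinAddOrder x)
    (h : ∀ p : ℕ, p.Prime → ∀ (k : ℕ), ∀ x ∈ H, p ^ k • x = 0 → x ∈ K) : H ≤ K := by
  suffices ∀ d : ℕ, d ≠ 0 → ∀ x ∈ H, d • x = 0 → x ∈ K from fun x hx =>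
    this _ (hH x hx).addOrderOf_pos.ne' x hx (addOrderOf_nsmul_eq_zero x)
  refine Nat.recOnPosPrimePosCoprime (fun p k hp _ _ => h p hp k) (fun h0 => absurd rfl h0)
    (fun _ x _ hx => by rw [one_nsmul] at hx; exact hx ▸ K.zero_mem) ?_
  intro a b ha hb hab iha ihb _ x hxH hx
  obtain ⟨u, v, huv⟩ := Nat.isCoprime_iff_coprime.2 hab
  -- Bézout splits `x` into a part killed by `b` and a part killed by `a`
  have hx' : ((a : ℤ) * b) • x = 0 := by rw [← Nat.cast_mul, natCast_zsmul, hx]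
  rw [← one_smul ℤ x, ← huv, add_smul]
  refine add_mem (ihb (by omega) _ (H.zsmul_mem hxH _) ?_)
    (iha (by omega) _ (H.zsmul_mem hxH _) ?_)
  · rw [← natCast_zsmul, smul_smul, show (b : ℤ) * (u * a) = u * (a * b) by ring, mul_smul, hx',
      smul_zero]
  · rw [← natCast_zsmul, smul_smul, show (a : ℤ) * (v * b) = v * (a * b) by ring, mul_smul, hx',
      smul_zero]

theorem pow_apply_eq_zero_of_prime_pow_nsmul_eq_zero {G : Type*} [AddCommGroup G] {n : ℕ}
    (hG : ∀ (φ : AddMonoid.End G) (x : G), (φ ^ (n + 1)) x = 0 → (φ ^ n) x = 0)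
    (ψ : AddMonoid.End (AddCommGroup.torsion G)) {p : ℕ} (hp : p.Prime) {k : ℕ}
    {x : AddCommGroup.torsion G} (hx : p ^ k • x = 0) (hψx : (ψ ^ (n + 1)) x = 0) :
    (ψ ^ n) x = 0 := by
  obtain ⟨C, hcompl⟩ := exists_isCompl_torsionBy_prime_pow hG hp
  set B := torsionBy ℤ G ((p : ℤ) ^ n)
  have hBT : ∀ g ∈ B, g ∈ AddCommGroup.torsion G := fun g hg =>
    isOfFinAddOrder_iff_nsmul_eq_zero.2 ⟨p ^ n, pow_pos hp.pos n, by
      rw [← natCast_zsmul, Nat.cast_pow]; exact (mem_torsionBy_iff _ _).1 hg⟩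
  let π : G →+ AddCommGroup.torsion G := AddMonoidHom.codRestrict
    (B.subtype ∘ₗ B.projectionOnto C hcompl).toAddMonoidHom _ fun g => hBT _ (coe_mem _)
  have hxB : x ∈ {t : AddCommGroup.torsion G | (p : ℤ) ^ n • t = 0} := by
    refine Subtype.ext (pow_smul_eq_zero_of_pow_succ_apply_eq_zero hG (m := k) _ ?_)
    exact_mod_cast congrArg Subtype.val hx
  refine pow_apply_eq_zero_of_leftInvOn hG ψ ?_ (AddCommGroup.torsion G).subtype_injective
    (π := π) ?_ hxB hψx
  · intro t (ht : (p : ℤ) ^ n • t = 0)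
    change (p : ℤ) ^ n • ψ t = 0
    rw [← map_zsmul, ht, map_zero]
  · intro t ht
    have htB : (t : G) ∈ B :=
      (mem_torsionBy_iff _ _).2 (by exact_mod_cast congrArg Subtype.val ht)
    exact Subtype.ext (congrArg Subtype.val (B.projectionOnto_apply_left hcompl ⟨t, htB⟩) :
      ((B.projectionOnto C hcompl t : B) : G) = t)

theorem stmt6 (G : Type*) [AddCommGroup G] (h : UniformlyStronglyHopfian G) :
    StronglyHopfian (AddCommGroup.torsion G) := by
  obtain ⟨n, hinj⟩ := h
  have hG : ∀ (φ : AddMonoid.End G) (x : G), (φ ^ (n + 1)) x = 0 → (φ ^ n) x = 0 :=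
    fun φ _ => pow_apply_eq_zero_of_injOn (hinj φ)
  intro ψ
  refine ⟨n, fun m hm => ker_pow_eq_of_pow_succ_apply_eq_zero (fun x hx => ?_) hm⟩
  refine AddSubgroup.le_of_forall_prime_pow_nsmul_eq_zero
    (H := AddMonoidHom.ker (ψ ^ (n + 1) : _ →+ _)) (K := AddMonoidHom.ker (ψ ^ n : _ →+ _))
    (fun t _ => AddSubmonoid.isOfFinAddOrder_coe.1 t.2)
    (fun p hp k t ht htp => pow_apply_eq_zero_of_prime_pow_nsmul_eq_zero hG ψ hp htp ht) hx
end

section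
/- Let H be a fully invariant subgroup of an abelian group G and φ an endomorphism of G. If n₁ is an SH-exponent for the restriction of φ to H and n₂ is an SH-exponent for the induced endomorphism of G/H, then n₁ + n₂ is an SH-exponent for φ. -/
theorem stmt7 {G : Type*} [AddCommGroup G] (H : AddSubgroup G)
    (hfi : ∀ ψ : AddMonoid.End G, H.map (ψ : G →+ G) ≤ H)
    (φ : AddMonoid.End G)
    (ψ : AddMonoid.End (G ⧸ H))
    (hψ : ∀ x : G, ψ ((x : G ⧸ H)) = ((φ x : G) : G ⧸ H))
    (n₁ n₂ : ℕ)
    (h1 : ∀ x ∈ H, (φ ^ n₁ : G →+ G) x ≠ 0 →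
      ∀ m, n₁ ≤ m → (φ ^ m : G →+ G) x ≠ 0)
    (h2 : ∀ q : G ⧸ H, (ψ ^ n₂ : (G ⧸ H) →+ (G ⧸ H)) q ≠ 0 →
      ∀ m, n₂ ≤ m → (ψ ^ m : (G ⧸ H) →+ (G ⧸ H)) q ≠ 0) :
    ∀ x : G, (φ ^ (n₁ + n₂) : G →+ G) x ≠ 0 →
      ∀ m, n₁ + n₂ ≤ m → (φ ^ m : G →+ G) x ≠ 0 := by
  have key : ∀ (k : ℕ) (x : G),
      (ψ ^ k : (G ⧸ H) →+ (G ⧸ H)) (x : G ⧸ H) = (((φ ^ k : G →+ G) x : G) : G ⧸ H) := by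
    intro k
    induction k with
    | zero => intro x; simp
    | succ k ih =>
      intro x
      have : (ψ ^ (k+1)) = (ψ ^ k) * ψ := pow_succ ψ k
      rw [this, pow_succ]
      show (ψ ^ k) (ψ (x : G ⧸ H)) = _
      rw [hψ x, ih (φ x)]
      rfl
  intro x hx m hm
  by_cases hq : (ψ ^ n₂ : (G ⧸ H) →+ (G ⧸ H)) (x : G ⧸ H) = 0
  · -- φ^n₂ x ∈ H
    have hmem : (φ ^ n₂ : G →+ G) x ∈ H := by
      rw [key n₂ x] at hq
      exact (QuotientAddGroup.eq_zero_iff _).mp hq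
    have hx' : (φ ^ n₁ : G →+ G) ((φ ^ n₂ : G →+ G) x) ≠ 0 := by
      intro h0
      apply hx
      have : (φ ^ (n₁ + n₂)) = (φ ^ n₁) * (φ ^ n₂) := by rw [pow_add]
      rw [this]
      exact h0
    have := h1 _ hmem hx' (m - n₂) (by omega)
    intro h0
    apply this
    have : (φ ^ m) = (φ ^ (m - n₂)) * (φ ^ n₂) := by
      rw [← pow_add]; congr 1; omega
    rw [this] at h0
    exact h0
  · have := h2 _ hq m (by omega)
    intro h0
    apply this
    rw [key m x, h0]
    simp
end

section
/- If H is a fully invariant subgroup of an abelian group G and both H and G/H are strongly Hopfian, then G is strongly Hopfian. -/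
namespace AddMonoid.End

section AddZeroClass

variable {M : Type*} [AddZeroClass M] {φ : AddMonoid.End M}

theorem pow_add_apply (a b : ℕ) (x : M) : (φ ^ (a + b)) x = (φ ^ a) ((φ ^ b) x) := by
  rw [pow_add, coe_mul, Function.comp_apply]

theorem pow_apply_eq_zero_of_le {x : M} {n m : ℕ} (hx : (φ ^ n) x = 0) (hnm : n ≤ m) :
    (φ ^ m) x = 0 := by
  rw [← Nat.sub_add_cancel hnm, pow_add_apply, hx, map_zero]

end AddZeroClass

variable {G : Type*} [AddCommGroup G] {H : AddSubgroup G} {φ : AddMonoid.End G}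

def restrict (φ : AddMonoid.End G) (hφ : H ≤ H.comap φ) : AddMonoid.End H :=
  (AddMonoidHom.domRestrict φ H).codRestrict H fun x => hφ x.2

def quotientMap (φ : AddMonoid.End G) (hφ : H ≤ H.comap φ) : AddMonoid.End (G ⧸ H) :=
  QuotientAddGroup.map H H φ hφ

theorem coe_restrict_pow_apply (hφ : H ≤ H.comap φ) (k : ℕ) (x : H) :
    ((restrict φ hφ ^ k) x : G) = (φ ^ k) x := by
  simp only [coe_pow]
  exact Function.Semiconj.iterate_right (f := Subtype.val) (fun _ => rfl) k x

theorem quotientMap_pow_mk (hφ : H ≤ H.comap φ) (k : ℕ) (x : G) :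
    (quotientMap φ hφ ^ k) (x : G ⧸ H) = ((φ ^ k) x : G) := by
  simp only [coe_pow]
  exact (Function.Semiconj.iterate_right (f := ((↑) : G → G ⧸ H)) (fun _ => rfl) k x).symm

def KerPowStableFrom (φ : AddMonoid.End G) (n : ℕ) : Prop :=
  ∀ m, n ≤ m → AddMonoidHom.ker (φ ^ m : G →+ G) = AddMonoidHom.ker (φ ^ n : G →+ G)

theorem KerPowStableFrom.pow_apply_eq_zero {n m : ℕ} (h : KerPowStableFrom φ n) (hnm : n ≤ m)
    {x : G} (hx : (φ ^ m) x = 0) : (φ ^ n) x = 0 := by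
  have hx' : x ∈ AddMonoidHom.ker (φ ^ m : G →+ G) := hx
  rwa [h m hnm] at hx'

theorem kerPowStableFrom_add (hφ : H ≤ H.comap φ) {n₁ n₂ : ℕ}
    (h₁ : KerPowStableFrom (restrict φ hφ) n₁) (h₂ : KerPowStableFrom (quotientMap φ hφ) n₂) :
    KerPowStableFrom φ (n₁ + n₂) := by
  intro m hm
  ext x
  refine ⟨fun hx => ?_, fun hx => pow_apply_eq_zero_of_le hx hm⟩
  change (φ ^ m) x = 0 at hx
  change (φ ^ (n₁ + n₂)) x = 0
  obtain ⟨k, rfl⟩ : ∃ k, m = k + n₁ + n₂ := ⟨m - (n₁ + n₂), by omega⟩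
  have hxH : (φ ^ n₂) x ∈ H := by
    rw [← QuotientAddGroup.eq_zero_iff, ← quotientMap_pow_mk hφ]
    refine h₂.pow_apply_eq_zero (m := k + n₁ + n₂) (Nat.le_add_left _ _) ?_
    rw [quotientMap_pow_mk, hx, QuotientAddGroup.mk_zero]
  have hy : (restrict φ hφ ^ (k + n₁)) ⟨_, hxH⟩ = 0 := by
    ext
    rw [coe_restrict_pow_apply, ← pow_add_apply, hx]
    rfl
  rw [pow_add_apply, ← coe_restrict_pow_apply hφ n₁ ⟨_, hxH⟩,
    h₁.pow_apply_eq_zero (Nat.le_add_left n₁ k) hy]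
  rfl

end AddMonoid.End

theorem stmt8 {G : Type*} [AddCommGroup G] (H : AddSubgroup G)
    (hfi : ∀ ψ : AddMonoid.End G, H.map (ψ : G →+ G) ≤ H)
    (hH : StronglyHopfian H) (hQ : StronglyHopfian (G ⧸ H)) :
    StronglyHopfian G := by
  intro φ
  have hφ : H ≤ H.comap φ := AddSubgroup.map_le_iff_le_comap.mp (hfi φ)
  obtain ⟨n₁, h₁⟩ := hH (φ.restrict hφ)
  obtain ⟨n₂, h₂⟩ := hQ (φ.quotientMap hφ)
  exact ⟨n₁ + n₂, AddMonoid.End.kerPowStableFrom_add hφ h₁ h₂⟩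
end

section
/- Suppose G = H ⊕ K where Hom(H,K) = 0 (so H is fully invariant in G). Then G is strongly Hopfian if and only if both H and K are strongly Hopfian. -/
/-
Since `Hom(H, K) = 0`, every endomorphism `φ` of `H × K` is upper triangular,
`φ (h, k) = (α h + β k, δ k)`. If `ker αⁿ¹` and `ker δⁿ²` are stationary, then `φᵐ x = 0` with
`m ≥ n₁ + n₂` forces `δⁿ² k = 0`, so `φⁿ² x` lies in `H × 0`, where `φ` acts as `α`; hence
`φⁿ¹⁺ⁿ² x = 0`. Conversely, `H` and `K` are direct summands, and an endomorphism extended by the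
identity on the other summand has the same kernel chain.
-/

open Function

namespace AddMonoid.End

variable {G H K : Type*} [AddCommGroup G] [AddCommGroup H] [AddCommGroup K]

def HasStableKernels (φ : AddMonoid.End G) : Prop :=
  ∃ n : ℕ, ∀ m : ℕ, n ≤ m →
    AddMonoidHom.ker (φ ^ m : G →+ G) = AddMonoidHom.ker (φ ^ n : G →+ G)

theorem iterate_eq_zero_of_le (φ : AddMonoid.End G) {n m : ℕ} (hnm : n ≤ m) {x : G}
    (hx : φ^[n] x = 0) : φ^[m] x = 0 := by
  obtain ⟨c, rfl⟩ := Nat.exists_eq_add_of_le' hnm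
  rw [iterate_add_apply, hx, iterate_map_zero]

theorem hasStableKernels_iff (φ : AddMonoid.End G) :
    φ.HasStableKernels ↔ ∃ n : ℕ, ∀ m : ℕ, n ≤ m → ∀ x : G, φ^[m] x = 0 → φ^[n] x = 0 := by
  refine exists_congr fun n => forall₂_congr fun m hnm => ?_
  refine ⟨fun h x hx => ?_, fun h => le_antisymm (fun x => h x) fun x => ?_⟩
  · exact (SetLike.ext_iff.mp h x).mp hx
  · exact φ.iterate_eq_zero_of_le hnm

theorem HasStableKernels.of_semiconj {α : AddMonoid.End H} {ψ : AddMonoid.End G} (f : H →+ G)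
    (hf : Injective f) (hs : Semiconj f α ψ) (hψ : ψ.HasStableKernels) : α.HasStableKernels := by
  rw [hasStableKernels_iff] at hψ ⊢
  obtain ⟨n, hn⟩ := hψ
  refine ⟨n, fun m hnm x hx => hf ?_⟩
  rw [hs.iterate_right n x, map_zero]
  exact hn m hnm _ (by rw [← hs.iterate_right m x, hx, map_zero])

theorem HasStableKernels.of_extension {α : AddMonoid.End H} {φ : AddMonoid.End G}
    {δ : AddMonoid.End K} (i : H →+ G) (p : G →+ K) (hi : Injective i)
    (hexact : ∀ x, p x = 0 → ∃ y, i y = x) (hα : Semiconj i α φ) (hδ : Semiconj p φ δ)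
    (hαs : α.HasStableKernels) (hδs : δ.HasStableKernels) : φ.HasStableKernels := by
  rw [hasStableKernels_iff] at hαs hδs ⊢
  obtain ⟨n₁, hn₁⟩ := hαs
  obtain ⟨n₂, hn₂⟩ := hδs
  refine ⟨n₁ + n₂, fun m hm x hx => ?_⟩
  have hpx : δ^[n₂] (p x) = 0 :=
    hn₂ m (by omega) _ (by rw [← hδ.iterate_right m x, hx, map_zero])
  obtain ⟨y, hy⟩ := hexact (φ^[n₂] x) (by rw [hδ.iterate_right, hpx])
  have hαy : α^[m - n₂] y = 0 := hi (by
    rw [hα.iterate_right, hy, ← iterate_add_apply, Nat.sub_add_cancel (by omega), hx, map_zero])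
  rw [iterate_add_apply, ← hy, ← hα.iterate_right, hn₁ _ (by omega) y hαy, map_zero]

theorem snd_apply_mk_zero_of_hom_eq_zero (hhom : ∀ f : H →+ K, f = 0)
    (φ : AddMonoid.End (H × K)) (h : H) : (φ (h, 0)).2 = 0 :=
  DFunLike.congr_fun (hhom ((AddMonoidHom.snd H K).comp
    ((φ : H × K →+ H × K).comp (AddMonoidHom.inl H K)))) h

theorem snd_apply_of_hom_eq_zero (hhom : ∀ f : H →+ K, f = 0) (φ : AddMonoid.End (H × K))
    (x : H × K) : (φ x).2 = (φ (0, x.2)).2 := by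
  conv_lhs => rw [← Prod.fst_add_snd x, map_add]
  rw [Prod.snd_add, snd_apply_mk_zero_of_hom_eq_zero hhom, zero_add]

end AddMonoid.End

namespace StronglyHopfian

open AddMonoid.End

variable {H K : Type*} [AddCommGroup H] [AddCommGroup K]

theorem of_prod_left (hG : StronglyHopfian (H × K)) : StronglyHopfian H := fun φ =>
  HasStableKernels.of_semiconj (AddMonoidHom.inl H K) (Prod.mk_left_injective 0) (fun _ => rfl)
    (hG ((φ : H →+ H).prodMap (AddMonoidHom.id K)))

theorem of_prod_right (hG : StronglyHopfian (H × K)) : StronglyHopfian K := fun φ =>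
  HasStableKernels.of_semiconj (AddMonoidHom.inr H K) (Prod.mk_right_injective 0) (fun _ => rfl)
    (hG ((AddMonoidHom.id H).prodMap (φ : K →+ K)))

theorem prod (hhom : ∀ f : H →+ K, f = 0) (hH : StronglyHopfian H) (hK : StronglyHopfian K) :
    StronglyHopfian (H × K) := fun φ =>
  HasStableKernels.of_extension
    (α := (AddMonoidHom.fst H K).comp ((φ : H × K →+ H × K).comp (AddMonoidHom.inl H K)))
    (δ := (AddMonoidHom.snd H K).comp ((φ : H × K →+ H × K).comp (AddMonoidHom.inr H K)))
    (AddMonoidHom.inl H K) (AddMonoidHom.snd H K) (Prod.mk_left_injective 0)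
    (fun x hx => ⟨x.1, Prod.ext rfl hx.symm⟩)
    (fun h => Prod.ext rfl (snd_apply_mk_zero_of_hom_eq_zero hhom φ h).symm)
    (snd_apply_of_hom_eq_zero hhom φ) (hH _) (hK _)

end StronglyHopfian

theorem stmt10 {H K : Type*} [AddCommGroup H] [AddCommGroup K]
    (hhom : ∀ f : H →+ K, f = 0) :
    StronglyHopfian (H × K) ↔ StronglyHopfian H ∧ StronglyHopfian K :=
  ⟨fun hG => ⟨hG.of_prod_left, hG.of_prod_right⟩, fun ⟨hH, hK⟩ => .prod hhom hH hK⟩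
end

section
/- If G = T ⊕ H where T is torsion and H is torsion-free, then G is strongly Hopfian if and only if both T and H are strongly Hopfian. -/
/-!
An endomorphism `φ` of `T × H` maps the torsion part `T × 0` into itself, since `H` has no
torsion. So `φ` is triangular with diagonal blocks `α` on `T` and `γ` on `H`, and if the kernel
chains of `α` and `γ` stop at `n₁` and `n₂`, that of `φ` stops at `n₁ + n₂`: kill the `H`-part
with `φ ^ n₂` first and then the remaining `T`-part with `φ ^ n₁`. Conversely an endomorphism
`ψ` of a summand extends to `ψ × 0`, whose kernel chain restricts to that of `ψ`.
-/

namespace AddMonoid.End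

variable {A G B : Type*} [AddCommGroup A] [AddCommGroup G] [AddCommGroup B]

def KernelChainStabilizes (φ : AddMonoid.End G) : Prop :=
  ∃ n : ℕ, ∀ m : ℕ, n ≤ m →
    AddMonoidHom.ker (φ ^ m : G →+ G) = AddMonoidHom.ker (φ ^ n : G →+ G)

theorem mem_ker_pow {φ : AddMonoid.End G} {n : ℕ} {x : G} :
    x ∈ AddMonoidHom.ker (φ ^ n : G →+ G) ↔ (φ ^ n : G →+ G) x = 0 :=
  Iff.rfl

theorem pow_add_apply_s11 (φ : AddMonoid.End G) (m n : ℕ) (x : G) :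
    (φ ^ (m + n) : G →+ G) x = (φ ^ m : G →+ G) ((φ ^ n : G →+ G) x) := by
  rw [pow_add]
  rfl

theorem semiconj_pow {i : A → G} {ψ : AddMonoid.End A} {φ : AddMonoid.End G}
    (h : Function.Semiconj i ψ φ) (k : ℕ) :
    Function.Semiconj i ⇑(ψ ^ k : A →+ A) ⇑(φ ^ k : G →+ G) :=
  h.iterate_right k

theorem ker_pow_mono (φ : AddMonoid.End G) {n m : ℕ} (h : n ≤ m) :
    AddMonoidHom.ker (φ ^ n : G →+ G) ≤ AddMonoidHom.ker (φ ^ m : G →+ G) := by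
  obtain ⟨k, rfl⟩ := Nat.exists_eq_add_of_le' h
  intro x hx
  rw [mem_ker_pow] at hx ⊢
  rw [pow_add_apply_s11, hx, map_zero]

theorem KernelChainStabilizes.of_semiconj {i : A →+ G} (hi : Function.Injective i)
    {ψ : AddMonoid.End A} {φ : AddMonoid.End G} (h : Function.Semiconj i ψ φ)
    (hφ : φ.KernelChainStabilizes) : ψ.KernelChainStabilizes := by
  have ker_eq : ∀ k : ℕ, AddMonoidHom.ker (ψ ^ k : A →+ A) =
      (AddMonoidHom.ker (φ ^ k : G →+ G)).comap i := by
    intro k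
    ext a
    rw [AddSubgroup.mem_comap, mem_ker_pow, mem_ker_pow, ← semiconj_pow h k a,
      map_eq_zero_iff i hi]
  obtain ⟨n, hn⟩ := hφ
  exact ⟨n, fun m hm => by rw [ker_eq, ker_eq, hn m hm]⟩

theorem KernelChainStabilizes.of_exact {i : A →+ G} {p : G →+ B} (hi : Function.Injective i)
    (hip : Function.Exact i p) {α : AddMonoid.End A} {φ : AddMonoid.End G}
    {γ : AddMonoid.End B} (hiφ : Function.Semiconj i α φ) (hpφ : Function.Semiconj p φ γ)
    (hα : α.KernelChainStabilizes) (hγ : γ.KernelChainStabilizes) :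
    φ.KernelChainStabilizes := by
  obtain ⟨n₁, hn₁⟩ := hα
  obtain ⟨n₂, hn₂⟩ := hγ
  refine ⟨n₁ + n₂, fun m hm => le_antisymm (fun x hx => ?_) (ker_pow_mono φ hm)⟩
  obtain ⟨k, rfl⟩ := Nat.exists_eq_add_of_le' (le_of_add_le_right hm)
  rw [mem_ker_pow, pow_add_apply_s11] at hx ⊢
  have hpx : p x ∈ AddMonoidHom.ker (γ ^ n₂ : B →+ B) := by
    rw [← hn₂ (k + n₂) (Nat.le_add_left _ _), mem_ker_pow, ← semiconj_pow hpφ,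
      pow_add_apply_s11, hx, map_zero]
  obtain ⟨a, ha⟩ : (φ ^ n₂) x ∈ Set.range i := by
    rw [← hip, semiconj_pow hpφ]
    exact hpx
  have hka : a ∈ AddMonoidHom.ker (α ^ k : A →+ A) := by
    rw [mem_ker_pow]
    apply hi
    rwa [map_zero, semiconj_pow hiφ, ha]
  rw [hn₁ k (by omega), mem_ker_pow] at hka
  rw [← ha, ← semiconj_pow hiφ, hka, map_zero]

end AddMonoid.End

open AddMonoid.End

theorem AddMonoidHom.exact_inl_snd (A B : Type*) [AddCommGroup A] [AddCommGroup B] :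
    Function.Exact (AddMonoidHom.inl A B) (AddMonoidHom.snd A B) := by
  rintro ⟨a, b⟩
  simp [eq_comm]

theorem AddMonoidHom.eq_zero_of_isAddTorsion {T H : Type*} [AddCommGroup T] [AddCommGroup H]
    (htor : IsAddTorsion T) (htf : ∀ g : H, g ≠ 0 → ¬IsOfFinAddOrder g) (f : T →+ H) :
    f = 0 := by
  ext t
  by_contra hne
  exact htf _ hne (f.isOfFinAddOrder (htor t))

namespace StronglyHopfian

variable {A B : Type*} [AddCommGroup A] [AddCommGroup B]

theorem of_prod_left_s11 (h : StronglyHopfian (A × B)) : StronglyHopfian A := fun ψ =>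
  KernelChainStabilizes.of_semiconj (i := AddMonoidHom.inl A B) (Prod.mk_left_injective 0)
    (φ := AddMonoidHom.prodMap (M' := A) ψ (0 : B →+ B)) (fun _ => rfl) (h _)

theorem of_prod_right_s11 (h : StronglyHopfian (A × B)) : StronglyHopfian B := fun ψ =>
  KernelChainStabilizes.of_semiconj (i := AddMonoidHom.inr A B) (Prod.mk_right_injective 0)
    (φ := AddMonoidHom.prodMap (N' := B) (0 : A →+ A) ψ) (fun _ => rfl) (h _)

theorem prod_s11 (hA : StronglyHopfian A) (hB : StronglyHopfian B)
    (hAB : ∀ f : A →+ B, f = 0) : StronglyHopfian (A × B) := by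
  intro φ
  set α : AddMonoid.End A := (AddMonoidHom.fst A B).comp (φ.comp (AddMonoidHom.inl A B))
  set γ : AddMonoid.End B := (AddMonoidHom.snd A B).comp (φ.comp (AddMonoidHom.inr A B))
  have hsnd : ∀ a : A, (φ (a, 0)).2 = 0 :=
    DFunLike.congr_fun (hAB ((AddMonoidHom.snd A B).comp (φ.comp (AddMonoidHom.inl A B))))
  refine KernelChainStabilizes.of_exact (α := α) (γ := γ) (Prod.mk_left_injective 0)
    (AddMonoidHom.exact_inl_snd A B) (fun a => ?_) (fun x => ?_) (hA α) (hB γ)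
  · exact Prod.ext rfl (hsnd a).symm
  · have hsplit : φ x = φ (x.1, 0) + φ (0, x.2) := by
      rw [← map_add, Prod.mk_add_mk, add_zero, zero_add]
    show (φ x).2 = (φ (0, x.2)).2
    rw [hsplit, Prod.snd_add, hsnd, zero_add]

end StronglyHopfian

theorem stmt11 {T H : Type*} [AddCommGroup T] [AddCommGroup H]
    (htor : AddMonoid.IsTorsion T) (htf : ∀ g : H, g ≠ 0 → ¬IsOfFinAddOrder g) :
    StronglyHopfian (T × H) ↔ StronglyHopfian T ∧ StronglyHopfian H :=
  ⟨fun h => ⟨h.of_prod_left_s11, h.of_prod_right_s11⟩,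
    fun ⟨hT, hH⟩ => hT.prod_s11 hH (AddMonoidHom.eq_zero_of_isAddTorsion htor htf)⟩
end

section
/- Let G be a reduced abelian group such that for every prime p the p-torsion subgroup T_p of G is bounded (of bounded exponent). If G/T is divisible, where T is the torsion subgroup of G, then the first Ulm subgroup of G, namely {x ∈ G : the p-height of x in G is ≥ ω for all primes p}, is zero. -/
/-- A group is reduced if it has no nonzero divisible subgroup. -/
def IsReducedGroup (G : Type*) [AddCommGroup G] : Prop :=
  ∀ H : AddSubgroup G, (∀ x ∈ H, ∀ n : ℕ, 0 < n → ∃ y ∈ H, n • y = x) → H = ⊥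

theorem stmt12 {G : Type*} [AddCommGroup G]
    (hred : IsReducedGroup G)
    (hbdd : ∀ p : ℕ, p.Prime →
      ∃ k : ℕ, ∀ x : G, (∃ j : ℕ, p ^ j • x = 0) → p ^ k • x = 0)
    (hdiv : ∀ n : ℕ, 0 < n → ∀ q : G ⧸ AddCommGroup.torsion G, ∃ r, n • r = q) :
    ∀ x : G, (∀ p : ℕ, p.Prime → ∀ n : ℕ, ∃ y : G, p ^ n • y = x) → x = 0 := by
  intro x hx
  set U : AddSubgroup G :=
    { carrier := {a | ∀ p : ℕ, p.Prime → ∀ n : ℕ, ∃ y : G, p ^ n • y = a}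
      zero_mem' := fun p _ n => ⟨0, smul_zero _⟩
      add_mem' := by
        rintro a b ha hb p hp n
        obtain ⟨y1, h1⟩ := ha p hp n
        obtain ⟨y2, h2⟩ := hb p hp n
        exact ⟨y1 + y2, by rw [smul_add, h1, h2]⟩
      neg_mem' := by
        rintro a ha p hp n
        obtain ⟨y, h⟩ := ha p hp n
        exact ⟨-y, by rw [smul_neg, h]⟩ } with hU
  have key : ∀ a ∈ U, ∀ p : ℕ, p.Prime → ∃ y ∈ U, p • y = a := by
    intro a ha p hp
    obtain ⟨k, hk⟩ := hbdd p hp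
    obtain ⟨z, hz⟩ := ha p hp (k + 1)
    refine ⟨p ^ k • z, ?_, ?_⟩
    · -- p^k • z ∈ U
      intro q hq n
      by_cases hpq : q = p
      · subst hpq
        rcases le_or_gt n k with hnk | hnk
        · exact ⟨q ^ (k - n) • z, by rw [smul_smul, ← pow_add, Nat.add_sub_cancel' hnk]⟩
        · obtain ⟨u, hu⟩ := ha q hq (n + 1)
          have he : q ^ (k + 1) • (z - q ^ (n - k) • u) = 0 := by
            rw [smul_sub, smul_smul, ← pow_add, hz]
            have : k + 1 + (n - k) = n + 1 := by omega
            rw [this, hu, sub_self]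
          have h0 : q ^ k • (z - q ^ (n - k) • u) = 0 := hk _ ⟨k + 1, he⟩
          rw [smul_sub, sub_eq_zero, smul_smul, ← pow_add] at h0
          have : k + (n - k) = n := by omega
          rw [this] at h0
          exact ⟨u, h0.symm⟩
      · -- q ≠ p
        obtain ⟨u, hu⟩ := ha q hq n
        have hco : IsCoprime (p : ℤ) ((q : ℤ) ^ n) := by
          apply IsCoprime.pow_right
          rw [Int.isCoprime_iff_gcd_eq_one, Int.gcd_natCast_natCast]
          exact ((Nat.coprime_primes hp hq).mpr fun h => hpq h.symm)
        obtain ⟨s, t, hst⟩ := hco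
        refine ⟨s • u + t • (p ^ k • z), ?_⟩
        have hcast : ∀ (m : ℕ) (g : G), m • g = (m : ℤ) • g := fun m g =>
          (natCast_zsmul g m).symm
        have hpa : (p : ℤ) • (p ^ k • z) = a := by
          rw [hcast (p ^ k) z, smul_smul, ← Nat.cast_mul, ← hcast, ← pow_succ', hz]
        have hqu : ((q : ℤ) ^ n) • u = a := by
          rw [← Nat.cast_pow, ← hcast, hu]
        rw [hcast, Nat.cast_pow]
        rw [smul_add, smul_smul, smul_smul, mul_comm ((q:ℤ)^n) s, mul_comm ((q:ℤ)^n) t,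
          mul_smul, hqu, mul_smul, ← hpa, smul_smul, smul_smul, mul_comm s (p:ℤ),
          mul_comm t ((q:ℤ)^n)]
        rw [← add_smul]
        have h1 : (p : ℤ) * s + (q : ℤ) ^ n * t = 1 := by linarith [hst]
        rw [h1, one_smul]
    · rw [smul_smul, ← pow_succ', hz]
  have keyn : ∀ n : ℕ, 0 < n → ∀ a ∈ U, ∃ y ∈ U, n • y = a := by
    intro n
    induction n using Nat.strong_induction_on with
    | _ n ih =>
      intro hn a ha
      by_cases h1 : n = 1
      · exact ⟨a, ha, by rw [h1, one_smul]⟩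
      · have hp : (n.minFac).Prime := Nat.minFac_prime h1
        have hdvd : n.minFac ∣ n := Nat.minFac_dvd n
        have hmlt : n / n.minFac < n := Nat.div_lt_self hn hp.one_lt
        have hmpos : 0 < n / n.minFac := Nat.div_pos (Nat.minFac_le hn) hp.pos
        obtain ⟨y1, hy1U, hy1⟩ := ih _ hmlt hmpos a ha
        obtain ⟨y, hyU, hy⟩ := key y1 hy1U n.minFac hp
        refine ⟨y, hyU, ?_⟩
        have : n = n / n.minFac * n.minFac := (Nat.div_mul_cancel hdvd).symm
        rw [this, mul_smul, hy, hy1]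
  have hUbot : U = ⊥ := hred U fun a ha n hn => keyn n hn a ha
  have hxU : x ∈ U := hx
  rw [hUbot] at hxU
  simpa using hxU
end

section
/- Let G be a group with torsion subgroup T such that G/T is divisible and each p-torsion subgroup T_p is bounded. If γ is an endomorphism of G and G' = γ(G) with T' = γ(T), then G'/T' is torsion-free divisible and T' = G' ∩ T; in particular T' is the torsion subgroup of G'. -/
/-!
An element `γ g` of finite order splits into prime-power torsion multiples of itself, all still in
the image of `γ`, so it suffices to treat `p ^ e • γ g = 0`. Divide `g` by `p ^ k` modulo torsion,
`p ^ k • h = g + t` with `t` torsion, where `p ^ k` bounds the `p`-torsion. Then `γ h` is torsion;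
if `c` is the part of its order prime to `p`, then `c • γ h` is `p`-primary, hence killed by
`p ^ k`, so `c • γ g = -γ (c • t) ∈ γ(T)`. As `c` is prime to `p ^ e`, also `γ g ∈ γ(T)`.
-/

open AddCommGroup

namespace AddSubgroup

variable {G : Type*} [AddCommGroup G]

theorem mem_of_nsmul_mem_of_coprime (H : AddSubgroup G) {a b : ℕ} (hab : a.Coprime b) {x : G}
    (ha : a • x ∈ H) (hb : b • x ∈ H) : x ∈ H := by
  rw [← QuotientAddGroup.eq_zero_iff, QuotientAddGroup.mk_nsmul] at ha hb
  rw [← QuotientAddGroup.eq_zero_iff, ← AddMonoid.addOrderOf_eq_one_iff, ← Nat.dvd_one, ← hab]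
  exact Nat.dvd_gcd (addOrderOf_dvd_of_nsmul_eq_zero ha) (addOrderOf_dvd_of_nsmul_eq_zero hb)

theorem mem_of_isOfFinAddOrder_of_prime_pow {S H : AddSubgroup G}
    (hH : ∀ p e : ℕ, p.Prime → ∀ x ∈ S, p ^ e • x = 0 → x ∈ H) {x : G} (hxS : x ∈ S)
    (hx : IsOfFinAddOrder x) : x ∈ H := by
  suffices ∀ m : ℕ, 0 < m → ∀ x ∈ S, m • x = 0 → x ∈ H from
    this _ hx.addOrderOf_pos x hxS (addOrderOf_nsmul_eq_zero x)
  intro m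
  induction m using Nat.recOnPosPrimePosCoprime with
  | prime_pow p e hp _ => exact fun _ => hH p e hp
  | zero => exact fun h => absurd h (lt_irrefl 0)
  | one =>
    intro _ x _ hx
    rw [one_nsmul] at hx
    exact hx ▸ H.zero_mem
  | coprime a b ha hb hab iha ihb =>
    intro _ x hxS hx
    refine H.mem_of_nsmul_mem_of_coprime hab (ihb (by omega) _ (S.nsmul_mem hxS a) ?_)
      (iha (by omega) _ (S.nsmul_mem hxS b) ?_)
    · rwa [smul_smul, mul_comm]
    · rwa [smul_smul]

end AddSubgroup

section

variable {G M : Type*} [AddCommGroup G] [AddCommGroup M]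

theorem exists_nsmul_sub_mem_of_forall_exists_nsmul_eq {H : AddSubgroup G} {n : ℕ}
    (hn : ∀ q : G ⧸ H, ∃ r, n • r = q) (g : G) : ∃ h, n • h - g ∈ H := by
  obtain ⟨r, hr⟩ := hn g
  obtain ⟨h, rfl⟩ := QuotientAddGroup.mk_surjective r
  exact ⟨h, QuotientAddGroup.eq_iff_sub_mem.1 hr⟩

theorem mem_map_torsion_of_prime_pow_nsmul_eq_zero {p k e : ℕ} (hp : p.Prime)
    (hdiv : ∀ q : G ⧸ torsion G, ∃ r, p ^ k • r = q)
    (hbdd : ∀ x : M, (∃ j : ℕ, p ^ j • x = 0) → p ^ k • x = 0)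
    (f : G →+ M) {g : G} (hg : p ^ e • f g = 0) : f g ∈ (torsion G).map f := by
  obtain ⟨h, ht⟩ := exists_nsmul_sub_mem_of_forall_exists_nsmul_eq hdiv g
  have hfh : p ^ k • f h = f g + f (p ^ k • h - g) := by
    rw [map_sub, map_nsmul]
    abel
  have hfh_tors : IsOfFinAddOrder (f h) := by
    refine IsOfFinAddOrder.of_nsmul ?_ (pow_ne_zero k hp.ne_zero)
    rw [hfh]
    exact (torsion M).add_mem
      (isOfFinAddOrder_iff_nsmul_eq_zero.2 ⟨p ^ e, pow_pos hp.pos e, hg⟩) (f.isOfFinAddOrder ht)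
  set N := addOrderOf (f h)
  set c := N / p ^ N.factorization p
  have hc : c • f g ∈ (torsion G).map f := by
    have hkill : c • (p ^ k • f h) = 0 := by
      rw [smul_comm]
      refine hbdd _ ⟨N.factorization p, ?_⟩
      rw [smul_smul, Nat.ordProj_mul_ordCompl_eq_self, addOrderOf_nsmul_eq_zero]
    rw [hfh, smul_add, add_eq_zero_iff_eq_neg, ← map_nsmul f c (p ^ k • h - g),
      ← map_neg] at hkill
    rw [hkill]
    exact ⟨_, (torsion G).neg_mem ((torsion G).nsmul_mem ht c), rfl⟩
  exact ((torsion G).map f).mem_of_nsmul_mem_of_coprime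
    ((Nat.coprime_ordCompl hp hfh_tors.addOrderOf_pos.ne').pow_left e) (hg ▸ zero_mem _) hc

end

theorem stmt13 {G : Type*} [AddCommGroup G]
    (hdiv : ∀ n : ℕ, 0 < n → ∀ q : G ⧸ AddCommGroup.torsion G, ∃ r, n • r = q)
    (hbdd : ∀ p : ℕ, p.Prime →
      ∃ k : ℕ, ∀ x : G, (∃ j : ℕ, p ^ j • x = 0) → p ^ k • x = 0)
    (γ : AddMonoid.End G)
    (G' T' : AddSubgroup G)
    (hG' : G' = AddMonoidHom.range (γ : G →+ G))
    (hT' : T' = (AddCommGroup.torsion G).map (γ : G →+ G)) :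
    -- G'/T' is divisible:
    (∀ x ∈ G', ∀ n : ℕ, 0 < n → ∃ y ∈ G', n • y - x ∈ T') ∧
    -- G'/T' is torsion-free:
    (∀ x ∈ G', ∀ n : ℕ, 0 < n → n • x ∈ T' → x ∈ T') ∧
    -- T' = G' ∩ T, so T' is the torsion subgroup of G':
    T' = G' ⊓ AddCommGroup.torsion G := by
  subst hG' hT'
  have hT : (torsion G).map (γ : G →+ G) = (γ : G →+ G).range ⊓ torsion G := by
    refine le_antisymm ?_ ?_
    · rintro _ ⟨s, hs, rfl⟩
      exact ⟨⟨s, rfl⟩, (γ : G →+ G).isOfFinAddOrder hs⟩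
    · rintro x ⟨hxS, hx⟩
      refine AddSubgroup.mem_of_isOfFinAddOrder_of_prime_pow ?_ hxS hx
      rintro p e hp _ ⟨g, rfl⟩ hg
      obtain ⟨k, hk⟩ := hbdd p hp
      exact mem_map_torsion_of_prime_pow_nsmul_eq_zero hp (hdiv _ (pow_pos hp.pos k)) hk _ hg
  refine ⟨?_, ?_, hT⟩
  · rintro _ ⟨g, rfl⟩ n hn
    obtain ⟨h, ht⟩ := exists_nsmul_sub_mem_of_forall_exists_nsmul_eq (hdiv n hn) g
    exact ⟨γ h, ⟨h, rfl⟩, ⟨_, ht, (map_sub γ _ _).trans (congrArg (· - γ g) (map_nsmul γ n h))⟩⟩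
  · intro x hx n hn hnx
    rw [hT] at hnx ⊢
    exact ⟨hx, hnx.2.of_nsmul hn.ne'⟩
end

section
/- Let G be a reduced abelian group whose torsion subgroup T satisfies: G/T is divisible, each p-torsion subgroup T_p is finite, and T is strongly Hopfian. Then G is uniformly strongly Hopfian. -/
/-!
The torsion subgroup `T` is the direct sum of its finite primary components `T_p`, so
endomorphisms of the `T_p` can be chosen independently and glued into one endomorphism of `T`.
On a finite `T_p` a jump `ker φⁿ ⊊ ker φⁿ⁺¹` can only occur for `n < |T_p|`; if such jumps
occurred arbitrarily late, gluing for every `p` an endomorphism with the latest possible jump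
would give an endomorphism of `T` that is not strongly Hopfian. Hence there is `N` such that no
endomorphism of `G` has a kernel jump at any `n ≥ N` on any `T_p`.

Now let `φ x = φ y` with `x - y = φᴺ⁺¹ c`, and let `p^e T_p = 0`. Since `G/T` is divisible,
`c = u + p^(k+e) g` with `u ∈ T_p`; applying `φ` shows `φᴺ⁺² u ∈ p^(k+e) T_p = 0`, so
`φᴺ⁺¹ u = 0` and `x - y ∈ p^k G`. Thus `x - y` lies in `⋂ₙ nG`, which is divisible because
every `G[n]` is finite, and therefore vanishes as `G` is reduced.
-/

namespace AddCommGroup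

variable {A : Type*} [AddCommGroup A]

theorem exists_zsmul_add_zsmul_eq_self {a b : ℕ} (hab : a.Coprime b) :
    ∃ α β : ℤ, ∀ x : A, (α * a) • x + (β * b) • x = x := by
  obtain ⟨α, β, h⟩ := Nat.isCoprime_iff_coprime.mpr hab
  exact ⟨α, β, fun x => by rw [← add_smul, h, one_smul]⟩

theorem eq_zero_of_coprime {a b : ℕ} (hab : a.Coprime b) {x : A} (ha : a • x = 0)
    (hb : b • x = 0) : x = 0 := by
  obtain ⟨α, β, h⟩ := exists_zsmul_add_zsmul_eq_self (A := A) hab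
  linear_combination (norm := module) -(h x) + α • ha + β • hb

theorem exists_add_of_mul_nsmul_eq_zero {a b : ℕ} (hab : a.Coprime b) {x : A}
    (hx : (a * b) • x = 0) : ∃ u v, a • u = 0 ∧ b • v = 0 ∧ u + v = x := by
  obtain ⟨α, β, h⟩ := exists_zsmul_add_zsmul_eq_self (A := A) hab
  refine ⟨(β * b) • x, (α * a) • x, ?_, ?_, by rw [add_comm, h]⟩
  · linear_combination (norm := module) β • hx
  · linear_combination (norm := module) α • hx

theorem exists_nsmul_eq_of_coprime {a b : ℕ} (hab : a.Coprime b) {x : A} (hb : b • x = 0) :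
    ∃ y, a • y = x := by
  obtain ⟨α, β, h⟩ := exists_zsmul_add_zsmul_eq_self (A := A) hab
  exact ⟨α • x, by linear_combination (norm := module) h x - β • hb⟩

theorem exists_mul_nsmul_eq_of_coprime {a b : ℕ} (hab : a.Coprime b) {x : A}
    (ha : ∃ y, a • y = x) (hb : ∃ y, b • y = x) : ∃ y, (a * b) • y = x := by
  obtain ⟨u, rfl⟩ := ha
  obtain ⟨v, hv⟩ := hb
  obtain ⟨α, β, h⟩ := exists_zsmul_add_zsmul_eq_self (A := A) hab
  exact ⟨β • u + α • v, by linear_combination (norm := module) h (a • u) + (α * a) • hv⟩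

theorem pow_nsmul_eq_zero_of_le {p k l : ℕ} {x : A} (hx : p ^ k • x = 0) (hkl : k ≤ l) :
    p ^ l • x = 0 := by
  rw [← Nat.sub_add_cancel hkl, pow_add, mul_nsmul', hx, nsmul_zero]

variable (A) in
def primaryPart (p : ℕ) : Submodule ℤ A where
  carrier := {x | ∃ k, p ^ k • x = 0}
  zero_mem' := ⟨0, nsmul_zero _⟩
  add_mem' := by
    rintro x y ⟨k, hk⟩ ⟨l, hl⟩
    refine ⟨k + l, ?_⟩
    rw [nsmul_add, pow_nsmul_eq_zero_of_le hk le_self_add,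
      pow_nsmul_eq_zero_of_le hl le_add_self, add_zero]
  smul_mem' := by
    rintro c x ⟨k, hk⟩
    exact ⟨k, by rw [smul_comm, hk, smul_zero]⟩

variable (A) in
def coprimePart (p : ℕ) : Submodule ℤ A where
  carrier := {x | ∃ m : ℕ, m.Coprime p ∧ m • x = 0}
  zero_mem' := ⟨1, Nat.coprime_one_left p, nsmul_zero _⟩
  add_mem' := by
    rintro x y ⟨m, hm, hmx⟩ ⟨n, hn, hny⟩
    refine ⟨m * n, hm.mul_left hn, ?_⟩
    rw [nsmul_add, mul_nsmul, hmx, nsmul_zero, mul_nsmul', hny, nsmul_zero, add_zero]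
  smul_mem' := by
    rintro c x ⟨m, hm, hmx⟩
    exact ⟨m, hm, by rw [smul_comm, hmx, smul_zero]⟩

variable {p : ℕ}

theorem mem_primaryPart {x : A} : x ∈ primaryPart A p ↔ ∃ k, p ^ k • x = 0 := Iff.rfl

theorem map_mem_primaryPart {B : Type*} [AddCommGroup B] (f : A →+ B) {x : A}
    (hx : x ∈ primaryPart A p) : f x ∈ primaryPart B p := by
  obtain ⟨k, hk⟩ := hx
  exact ⟨k, by rw [← map_nsmul, hk, map_zero]⟩

theorem mem_primaryPart_iff_of_injective {B : Type*} [AddCommGroup B] {f : A →+ B}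
    (hf : Function.Injective f) {x : A} : f x ∈ primaryPart B p ↔ x ∈ primaryPart A p := by
  simp only [mem_primaryPart, ← map_nsmul, map_eq_zero_iff f hf]

theorem mem_coprimePart_of_not_dvd (hp : p.Prime) {x : A} (h : ¬p ∣ addOrderOf x) :
    x ∈ coprimePart A p :=
  ⟨addOrderOf x, (hp.coprime_iff_not_dvd.mpr h).symm, addOrderOf_nsmul_eq_zero x⟩

theorem primaryPart_le_coprimePart {q : ℕ} (hp : p.Prime) (hq : q.Prime) (hpq : p ≠ q) :
    primaryPart A p ≤ coprimePart A q := fun _ ⟨k, hk⟩ =>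
  ⟨p ^ k, ((Nat.coprime_primes hp hq).mpr hpq).pow_left k, hk⟩

theorem disjoint_primaryPart_coprimePart : Disjoint (primaryPart A p) (coprimePart A p) :=
  Submodule.disjoint_def.mpr fun _ ⟨k, hk⟩ ⟨_, hm, hmx⟩ =>
    eq_zero_of_coprime (hm.pow_right k) hmx hk

theorem exists_mem_primaryPart_add_mem_coprimePart (hp : p.Prime) {x : A}
    (hx : IsOfFinAddOrder x) :
    ∃ u ∈ primaryPart A p, ∃ v ∈ coprimePart A p, u + v = x := by
  obtain ⟨e, m, hpm, hem⟩ :=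
    Nat.exists_eq_pow_mul_and_not_dvd hx.addOrderOf_pos.ne' p hp.one_lt.ne'
  have hmp : m.Coprime p := (hp.coprime_iff_not_dvd.mpr hpm).symm
  obtain ⟨u, v, hu, hv, rfl⟩ :=
    exists_add_of_mul_nsmul_eq_zero (hmp.symm.pow_left e) (hem ▸ addOrderOf_nsmul_eq_zero x)
  exact ⟨u, ⟨e, hu⟩, v, ⟨m, hmp, hv⟩, rfl⟩

theorem isCompl_primaryPart_coprimePart (hA : IsAddTorsion A) (hp : p.Prime) :
    IsCompl (primaryPart A p) (coprimePart A p) where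
  disjoint := disjoint_primaryPart_coprimePart
  codisjoint := Submodule.codisjoint_iff_exists_add_eq.mpr fun x =>
    let ⟨u, hu, v, hv, huv⟩ := exists_mem_primaryPart_add_mem_coprimePart hp (hA x)
    ⟨u, v, hu, hv, huv⟩

section PrimaryProjection

variable (hA : IsAddTorsion A)
include hA

noncomputable def primaryProj (p : Nat.Primes) : A →ₗ[ℤ] A :=
  (primaryPart A p).projection (coprimePart A p) (isCompl_primaryPart_coprimePart hA p.prop)

theorem primaryProj_apply_of_mem {p : Nat.Primes} {x : A} (hx : x ∈ primaryPart A p) :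
    primaryProj hA p x = x :=
  Submodule.projection_apply_of_mem_left _ hx

theorem primaryProj_apply_of_ne {p q : Nat.Primes} (hpq : p ≠ q) {x : A}
    (hx : x ∈ primaryPart A p) : primaryProj hA q x = 0 :=
  Submodule.projection_apply_of_mem_right _ <|
    primaryPart_le_coprimePart p.prop q.prop (Nat.Primes.coe_nat_injective.ne hpq) hx

theorem finite_support_primaryProj (x : A) :
    (Function.support fun p => primaryProj hA p x).Finite := by
  refine ((Nat.divisors (addOrderOf x)).finite_toSet.preimage
    Nat.Primes.coe_nat_injective.injOn).subset fun p hp => ?_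
  have hdvd : (p : ℕ) ∣ addOrderOf x := by
    by_contra h
    exact hp (Submodule.projection_apply_of_mem_right _ (mem_coprimePart_of_not_dvd p.prop h))
  simpa [Nat.mem_divisors, hdvd] using (hA x).addOrderOf_pos.ne'

theorem exists_addMonoidEnd_eqOn_primaryPart (φ : Nat.Primes → AddMonoid.End A) :
    ∃ Ψ : AddMonoid.End A, ∀ p : Nat.Primes, ∀ x ∈ primaryPart A p, Ψ x = φ p x := by
  have hsupp (x : A) : (Function.support fun p => φ p (primaryProj hA p x)).Finite :=
    (finite_support_primaryProj hA x).subset fun p hp h => hp (by simp only [h, map_zero])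
  refine ⟨{ toFun := fun x => ∑ᶠ p, φ p (primaryProj hA p x)
            map_zero' := by simp
            map_add' := fun x y => by
              simp only [map_add]
              exact finsum_add_distrib (hsupp x) (hsupp y) },
    fun p x hx => ?_⟩
  change ∑ᶠ q, φ q (primaryProj hA q x) = φ p x
  rw [finsum_eq_single _ p fun q hq => by
      rw [primaryProj_apply_of_ne hA (Ne.symm hq) hx, map_zero],
    primaryProj_apply_of_mem hA hx]

end PrimaryProjection

section KernelJumps

variable {S : Set A}

def KerPowJumpOn (φ : AddMonoid.End A) (S : Set A) (n : ℕ) : Prop :=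
  ∃ u ∈ S, (φ ^ (n + 1)) u = 0 ∧ (φ ^ n) u ≠ 0

theorem injective_pow_apply_of_ne_zero {φ : AddMonoid.End A} {u : A} {n : ℕ}
    (h₁ : (φ ^ (n + 1)) u = 0) (h₂ : (φ ^ n) u ≠ 0) :
    Function.Injective fun i : Fin (n + 1) => (φ ^ (i : ℕ)) u := by
  intro i j heq
  by_contra hne
  wlog hij : i < j generalizing i j
  · exact this heq.symm (Ne.symm hne) (lt_of_le_of_ne (not_lt.mp hij) (Ne.symm hne))
  apply h₂
  have hi : n = (n - i) + i := by omega
  have hj : (n - i) + j = (j - i - 1) + (n + 1) := by omega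
  simp only [AddMonoid.End.coe_pow] at heq h₁ ⊢
  rw [hi, Function.iterate_add_apply, heq, ← Function.iterate_add_apply, hj,
    Function.iterate_add_apply, h₁, Function.iterate_fixed (map_zero φ)]

theorem KerPowJumpOn.lt_ncard {φ : AddMonoid.End A} {n : ℕ} (h : KerPowJumpOn φ S n)
    (hS : S.Finite) (hφS : Set.MapsTo φ S S) : n < S.ncard := by
  obtain ⟨u, hu, h₁, h₂⟩ := h
  have : Finite S := hS.to_subtype
  have hmaps (i : ℕ) : (φ ^ i) u ∈ S := by
    rw [AddMonoid.End.coe_pow]; exact hφS.iterate i hu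
  have := Nat.card_le_card_of_injective
    (fun i : Fin (n + 1) => (⟨(φ ^ (i : ℕ)) u, hmaps i⟩ : S))
    fun i j hij => injective_pow_apply_of_ne_zero h₁ h₂ (congrArg Subtype.val hij)
  rw [Nat.card_eq_fintype_card, Fintype.card_fin, Nat.card_coe_set_eq] at this
  omega

theorem exists_kerPowJumpOn_ge (hS : S.Finite)
    (hφS : ∀ φ : AddMonoid.End A, Set.MapsTo φ S S) :
    ∃ ψ : AddMonoid.End A, ∀ φ n, KerPowJumpOn φ S n → ∃ m ≥ n, KerPowJumpOn ψ S m := by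
  set J := {n | ∃ φ, KerPowJumpOn φ S n}
  by_cases hJ : J.Nonempty
  · have hbdd : BddAbove J := ⟨S.ncard, fun n ⟨φ, h⟩ => (h.lt_ncard hS (hφS φ)).le⟩
    obtain ⟨ψ, hψ⟩ := Nat.sSup_mem hJ hbdd
    exact ⟨ψ, fun φ n h => ⟨sSup J, le_csSup hbdd ⟨φ, h⟩, hψ⟩⟩
  · exact ⟨0, fun φ n h => (hJ ⟨n, φ, h⟩).elim⟩

theorem not_kerPowJumpOn_of_ker_pow_eq {φ : AddMonoid.End A} {N : ℕ}
    (hN : ∀ m, N ≤ m → AddMonoidHom.ker (φ ^ m : A →+ A) = AddMonoidHom.ker (φ ^ N : A →+ A))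
    {m : ℕ} (hm : N ≤ m) : ¬KerPowJumpOn φ S m := by
  rintro ⟨u, -, h₁, h₂⟩
  have hu : u ∈ AddMonoidHom.ker (φ ^ (m + 1) : A →+ A) := h₁
  rw [hN _ (hm.trans m.le_succ), ← hN m hm] at hu
  exact h₂ hu

theorem pow_apply_eq_of_eqOn {φ ψ : AddMonoid.End A} (hφS : Set.MapsTo φ S S)
    (h : Set.EqOn ψ φ S) (n : ℕ) :
    Set.EqOn (ψ ^ n : AddMonoid.End A) (φ ^ n : AddMonoid.End A) S := by
  induction n with
  | zero => intro x _; rfl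
  | succ n ih =>
    intro x hx
    simp only [AddMonoid.End.coe_pow, Function.iterate_succ_apply] at ih ⊢
    rw [h hx, ih (hφS hx)]

end KernelJumps

theorem exists_forall_not_kerPowJumpOn_primaryPart_of_isAddTorsion (hA : IsAddTorsion A)
    (hfin : ∀ p : ℕ, p.Prime → (primaryPart A p : Set A).Finite) (hSH : StronglyHopfian A) :
    ∃ N, ∀ φ : AddMonoid.End A, ∀ p : ℕ, p.Prime → ∀ n, N ≤ n →
      ¬KerPowJumpOn φ (primaryPart A p) n := by
  have hstable (p : ℕ) (φ : AddMonoid.End A) :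
      Set.MapsTo φ (primaryPart A p) (primaryPart A p) :=
    fun _ => map_mem_primaryPart φ
  choose ψ hψ using fun p : Nat.Primes => exists_kerPowJumpOn_ge (hfin p p.prop) (hstable p)
  obtain ⟨Ψ, hΨ⟩ := exists_addMonoidEnd_eqOn_primaryPart hA ψ
  obtain ⟨N, hN⟩ := hSH Ψ
  refine ⟨N, fun φ p hp n hn hjump => ?_⟩
  obtain ⟨m, hnm, u, hu, h₁, h₂⟩ := hψ ⟨p, hp⟩ φ n hjump
  have hpow := pow_apply_eq_of_eqOn (hstable p (ψ ⟨p, hp⟩)) (hΨ ⟨p, hp⟩)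
  exact not_kerPowJumpOn_of_ker_pow_eq hN (hn.trans hnm)
    ⟨u, hu, by rwa [hpow _ hu], by rwa [hpow _ hu]⟩

section FirstUlmSubgroup

theorem finite_setOf_nsmul_eq_zero
    (hfin : ∀ p : ℕ, p.Prime → (primaryPart A p : Set A).Finite) {n : ℕ} (hn : 0 < n) :
    {x : A | n • x = 0}.Finite := by
  induction n using Nat.recOnPosPrimePosCoprime with
  | prime_pow p k hp _ => exact (hfin p hp).subset fun x hx => ⟨k, hx⟩
  | zero => exact absurd hn (lt_irrefl 0)
  | one => simp
  | coprime a b ha hb hab iha ihb =>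
    refine ((iha (by omega)).add (ihb (by omega))).subset fun x hx => ?_
    obtain ⟨u, v, hu, hv, rfl⟩ := exists_add_of_mul_nsmul_eq_zero hab hx
    exact Set.add_mem_add hu hv

theorem exists_nsmul_eq_of_forall_prime_pow {x : A}
    (h : ∀ p : ℕ, p.Prime → ∀ k, ∃ y, p ^ k • y = x) {n : ℕ} (hn : 0 < n) : ∃ y, n • y = x := by
  induction n using Nat.recOnPosPrimePosCoprime with
  | prime_pow p k hp _ => exact h p hp k
  | zero => exact absurd hn (lt_irrefl 0)
  | one => exact ⟨x, one_nsmul x⟩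
  | coprime a b ha hb hab iha ihb =>
    exact exists_mul_nsmul_eq_of_coprime hab (iha (by omega)) (ihb (by omega))

variable (A) in
def firstUlmSubgroup : AddSubgroup A where
  carrier := {x | ∀ n, 0 < n → ∃ y, n • y = x}
  zero_mem' _ _ := ⟨0, nsmul_zero _⟩
  add_mem' hx hy n hn :=
    let ⟨u, hu⟩ := hx n hn
    let ⟨v, hv⟩ := hy n hn
    ⟨u + v, by rw [nsmul_add, hu, hv]⟩
  neg_mem' hx n hn :=
    let ⟨u, hu⟩ := hx n hn
    ⟨-u, by rw [smul_neg, hu]⟩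

theorem exists_pos_forall_nsmul_ne {S : Set A} (hS : S.Finite)
    (hSU : ∀ y ∈ S, y ∉ firstUlmSubgroup A) : ∃ M, 0 < M ∧ ∀ y ∈ S, ∀ w : A, M • w ≠ y := by
  have : ∀ y ∈ S, ∃ c, 0 < c ∧ ∀ w : A, c • w ≠ y := fun y hy => by
    simpa [firstUlmSubgroup] using hSU y hy
  choose! c hc using this
  refine ⟨∏ y ∈ hS.toFinset, c y, Finset.prod_pos fun y hy => (hc y (hS.mem_toFinset.mp hy)).1,
    fun y hy w hw => ?_⟩
  obtain ⟨d, hd⟩ := Finset.dvd_prod_of_mem c (hS.mem_toFinset.mpr hy)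
  exact (hc y hy).2 (d • w) (by rw [← mul_nsmul', ← hd, hw])

theorem exists_mem_firstUlmSubgroup_nsmul_eq
    (hfin : ∀ n : ℕ, 0 < n → {x : A | n • x = 0}.Finite) {z : A} (hz : z ∈ firstUlmSubgroup A)
    {n : ℕ} (hn : 0 < n) : ∃ y ∈ firstUlmSubgroup A, n • y = z := by
  by_contra! h
  obtain ⟨y₀, hy₀⟩ := hz n hn
  have hS : {y : A | n • y = z}.Finite :=
    ((hfin n hn).image (y₀ + ·)).subset fun y hy =>
      ⟨y - y₀, show n • (y - y₀) = 0 by rw [nsmul_sub, (hy : n • y = z), hy₀, sub_self],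
        add_sub_cancel y₀ y⟩
  obtain ⟨M, hM, hMS⟩ := exists_pos_forall_nsmul_ne hS fun y hy hyU => h y hyU hy
  obtain ⟨w, hw⟩ := hz (n * M) (Nat.mul_pos hn hM)
  exact hMS (M • w) (show n • M • w = z by rw [← mul_nsmul', hw]) w rfl

theorem firstUlmSubgroup_eq_bot (hred : IsReducedGroup A)
    (hfin : ∀ n : ℕ, 0 < n → {x : A | n • x = 0}.Finite) : firstUlmSubgroup A = ⊥ :=
  hred _ fun _ hz _ hn => exists_mem_firstUlmSubgroup_nsmul_eq hfin hz hn

end FirstUlmSubgroup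

theorem exists_pow_nsmul_eq_zero_of_finite (hfin : (primaryPart A p : Set A).Finite) :
    ∃ e, ∀ x ∈ primaryPart A p, p ^ e • x = 0 :=
  ((Filter.eventually_all_finite hfin).mpr fun _ ⟨k, hk⟩ =>
    Filter.eventually_atTop.mpr ⟨k, fun _ hl => pow_nsmul_eq_zero_of_le hk hl⟩).exists

theorem isOfFinAddOrder_of_mem_primaryPart (hp : p.Prime) {x : A}
    (hx : x ∈ primaryPart A p) : IsOfFinAddOrder x :=
  let ⟨k, hk⟩ := hx
  isOfFinAddOrder_iff_nsmul_eq_zero.mpr ⟨p ^ k, pow_pos hp.pos k, hk⟩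

section TorsionSubgroup

variable {G : Type*} [AddCommGroup G]

def restrictTorsion (φ : AddMonoid.End G) : AddMonoid.End (torsion G) :=
  AddMonoidHom.restrict (M' := (torsion G).toAddSubmonoid) (N' := (torsion G).toAddSubmonoid)
    (f := φ) fun _ => φ.isOfFinAddOrder

theorem coe_restrictTorsion_pow_apply (φ : AddMonoid.End G) (n : ℕ) (t : torsion G) :
    ((restrictTorsion φ ^ n) t : G) = (φ ^ n) t := by
  induction n generalizing t with
  | zero => rfl
  | succ n ih =>
    simp only [AddMonoid.End.coe_pow, Function.iterate_succ_apply] at ih ⊢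
    exact ih _

theorem exists_forall_not_kerPowJumpOn_primaryPart
    (hfin : ∀ p : ℕ, p.Prime → (primaryPart G p : Set G).Finite)
    (hT : StronglyHopfian (torsion G)) :
    ∃ N, ∀ φ : AddMonoid.End G, ∀ p : ℕ, p.Prime → ∀ n, N ≤ n →
      ¬KerPowJumpOn φ (primaryPart G p) n := by
  have hmem {p : ℕ} {t : torsion G} :
      t ∈ primaryPart (torsion G) p ↔ (t : G) ∈ primaryPart G p :=
    (mem_primaryPart_iff_of_injective (f := (torsion G).subtype) Subtype.val_injective).symm
  obtain ⟨N, hN⟩ := exists_forall_not_kerPowJumpOn_primaryPart_of_isAddTorsion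
    AddCommMonoid.addTorsion.isAddTorsion
    (fun p hp => ((hfin p hp).preimage Subtype.val_injective.injOn).subset fun _ => hmem.mp) hT
  refine ⟨N, fun φ p hp n hn ⟨u, hu, h₁, h₂⟩ => hN (restrictTorsion φ) p hp n hn
    ⟨⟨u, isOfFinAddOrder_of_mem_primaryPart hp hu⟩, hmem.mpr hu, ?_, ?_⟩⟩
  · exact Subtype.ext (by rw [coe_restrictTorsion_pow_apply]; exact h₁)
  · intro h
    have h' := congrArg Subtype.val h
    rw [coe_restrictTorsion_pow_apply] at h'
    exact h₂ h'

variable (hdiv : ∀ n : ℕ, 0 < n → ∀ q : G ⧸ torsion G, ∃ r, n • r = q)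
include hdiv

theorem exists_mem_primaryPart_add_pow_nsmul_eq (hp : p.Prime) (c : G) (m : ℕ) :
    ∃ u ∈ primaryPart G p, ∃ g, u + p ^ m • g = c := by
  obtain ⟨r, hr⟩ := hdiv (p ^ m) (pow_pos hp.pos m) c
  obtain ⟨z, rfl⟩ := QuotientAddGroup.mk_surjective r
  have ht : IsOfFinAddOrder (c - p ^ m • z) := by
    rw [← QuotientAddGroup.mk_nsmul, QuotientAddGroup.eq_iff_sub_mem] at hr
    exact (AddCommGroup.mem_torsion _).mp (by simpa using neg_mem hr)
  obtain ⟨u, hu, v, ⟨m', hm', hv⟩, huv⟩ := exists_mem_primaryPart_add_mem_coprimePart hp ht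
  obtain ⟨w, hw⟩ := exists_nsmul_eq_of_coprime (hm'.symm.pow_left m) hv
  exact ⟨u, hu, z + w, by linear_combination (norm := module) huv + hw⟩

theorem exists_pow_nsmul_eq_pow_apply (hp : p.Prime)
    (hfin : (primaryPart G p : Set G).Finite) {φ : AddMonoid.End G} {n : ℕ}
    (hn : ¬KerPowJumpOn φ (primaryPart G p) n) {c : G} (hc : φ ((φ ^ n) c) = 0) (k : ℕ) :
    ∃ g, p ^ k • g = (φ ^ n) c := by
  obtain ⟨e, he⟩ := exists_pow_nsmul_eq_zero_of_finite hfin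
  obtain ⟨u, hu, g, rfl⟩ := exists_mem_primaryPart_add_pow_nsmul_eq hdiv hp c (k + e)
  have hφu : (φ ^ (n + 1)) u ∈ primaryPart G p := map_mem_primaryPart _ hu
  have hsum : (φ ^ (n + 1)) u + p ^ (k + e) • (φ ^ (n + 1)) g = 0 := by
    rw [← map_nsmul, ← map_add, AddMonoid.End.coe_pow, Function.iterate_succ_apply',
      ← AddMonoid.End.coe_pow, hc]
  have hφg : (φ ^ (n + 1)) g ∈ primaryPart G p := ⟨k + e + e, by
    rw [pow_add, mul_nsmul, eq_neg_of_add_eq_zero_right hsum, smul_neg, he _ hφu, neg_zero]⟩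
  have hu₁ : (φ ^ (n + 1)) u = 0 := by
    rw [eq_neg_of_add_eq_zero_left hsum, pow_add, mul_nsmul', he _ hφg, nsmul_zero, neg_zero]
  have hu₀ : (φ ^ n) u = 0 := by_contra fun h => hn ⟨u, hu, hu₁, h⟩
  exact ⟨p ^ e • (φ ^ n) g, by
    rw [map_add, map_nsmul, hu₀, zero_add, ← mul_nsmul', ← pow_add]⟩

end TorsionSubgroup

end AddCommGroup

theorem stmt14 {G : Type*} [AddCommGroup G]
    (hred : IsReducedGroup G)
    (hdiv : ∀ n : ℕ, 0 < n → ∀ q : G ⧸ AddCommGroup.torsion G, ∃ r, n • r = q)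
    (hfin : ∀ p : ℕ, p.Prime → {x : G | ∃ k : ℕ, p ^ k • x = 0}.Finite)
    (hT : StronglyHopfian (AddCommGroup.torsion G)) :
    UniformlyStronglyHopfian G := by
  obtain ⟨N, hN⟩ := AddCommGroup.exists_forall_not_kerPowJumpOn_primaryPart hfin hT
  refine ⟨N + 1, fun φ => ?_⟩
  rintro _ ⟨a, rfl⟩ _ ⟨b, rfl⟩ hab
  have hker : φ ((φ ^ (N + 1)) (a - b)) = 0 := by rw [map_sub, map_sub, hab, sub_self]
  have hmem : (φ ^ (N + 1)) (a - b) ∈ AddCommGroup.firstUlmSubgroup G := fun n hn =>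
    AddCommGroup.exists_nsmul_eq_of_forall_prime_pow (fun p hp k =>
      AddCommGroup.exists_pow_nsmul_eq_pow_apply hdiv hp (hfin p hp) (hN φ p hp _ N.le_succ)
        hker k) hn
  rwa [AddCommGroup.firstUlmSubgroup_eq_bot hred
      fun n hn => AddCommGroup.finite_setOf_nsmul_eq_zero hfin hn,
    AddSubgroup.mem_bot, map_sub, sub_eq_zero] at hmem
end

section
/- Let G = ⊕_{i∈I} G_i where each G_i has torsion-free rank 1 with torsion subgroup T_i. For G_i, G_j write G_i ≾ G_j if there is a homomorphism G_i → G_j whose image is not contained in T_j. If for every n ∈ ℕ there exist n distinct indices i_1, …, i_n with G_{i_1} ≾ G_{i_2} ≾ ⋯ ≾ G_{i_n}, then G is not strongly Hopfian. -/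
/-!
Since `≾` is transitive between groups of rank one, the hypothesis yields pairwise disjoint chains
`C_N` of length `N + 2` for every `N`, each link carried by a homomorphism that is not
torsion-valued. Let `φ` act on every non-final vertex of every chain by its link and by `0`
elsewhere. In rank one such a link sends every non-torsion element to a non-torsion element, so
for a non-torsion `x` at the start of `C_N` we get `φ^(N+1) x ≠ 0` but `φ^(N+2) x = 0`: the chain
`ker φ^n` never stabilises.
-/

open scoped TensorProduct DirectSum

/-- `G ≾ G'`: there is a homomorphism `G → G'` whose image is not contained
in the torsion subgroup of `G'`. -/
def WalkLE (G G' : Type*) [AddCommGroup G] [AddCommGroup G'] : Prop :=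
  ∃ f : G →+ G', ¬ f.range ≤ AddCommGroup.torsion G'

section Torsion

variable {B D : Type*} [AddCommGroup B] [AddCommGroup D]

theorem one_tmul_eq_zero_iff_mem_torsion (x : B) :
    (1 : ℚ) ⊗ₜ[ℤ] x = 0 ↔ x ∈ AddCommGroup.torsion B := by
  rw [← TensorProduct.mk_apply (R := ℤ) (M := ℚ) (N := B) 1,
    IsLocalizedModule.eq_zero_iff (nonZeroDivisors ℤ),
    AddCommGroup.mem_torsion, isOfFinAddOrder_iff_zsmul_eq_zero]
  simp [mem_nonZeroDivisors_iff_ne_zero]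

/-- Otherwise the base change of `g` to `ℚ` would vanish on the spanning vector `1 ⊗ y`. -/
theorem map_notMem_torsion_of_finrank_eq_one (hrk : Module.finrank ℚ (ℚ ⊗[ℤ] B) = 1)
    (g : B →+ D) (hg : ¬ g.range ≤ AddCommGroup.torsion D) {y : B}
    (hy : y ∉ AddCommGroup.torsion B) : g y ∉ AddCommGroup.torsion D := by
  intro hgy
  let L := g.toIntLinearMap.baseChange ℚ
  have hL : ∀ z, L ((1 : ℚ) ⊗ₜ z) = (1 : ℚ) ⊗ₜ g z := fun z => rfl
  have hspan : Submodule.span ℚ {(1 : ℚ) ⊗ₜ[ℤ] y} = ⊤ :=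
    (finrank_eq_one_iff_of_nonzero _ (mt (one_tmul_eq_zero_iff_mem_torsion y).1 hy)).1 hrk
  have hL0 : L = 0 := LinearMap.ext_on hspan <| by
    rintro _ rfl
    simpa [hL] using (one_tmul_eq_zero_iff_mem_torsion (g y)).2 hgy
  refine hg fun _ ⟨z, hz⟩ => hz ▸ ?_
  rw [← one_tmul_eq_zero_iff_mem_torsion, ← hL, hL0, LinearMap.zero_apply]

theorem WalkLE.exists_notMem_torsion (h : WalkLE B D) : ∃ x : B, x ∉ AddCommGroup.torsion B := by
  obtain ⟨g, hg⟩ := h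
  obtain ⟨_, ⟨x, rfl⟩, hx⟩ := SetLike.not_le_iff_exists.1 hg
  exact ⟨x, fun h => hx (g.isOfFinAddOrder h)⟩

theorem WalkLE.trans {C : Type*} [AddCommGroup C] (hrk : Module.finrank ℚ (ℚ ⊗[ℤ] B) = 1)
    (h₁ : WalkLE C B) (h₂ : WalkLE B D) : WalkLE C D := by
  obtain ⟨f, hf⟩ := h₁
  obtain ⟨g, hg⟩ := h₂
  obtain ⟨_, ⟨x, rfl⟩, hx⟩ := SetLike.not_le_iff_exists.1 hf
  exact ⟨g.comp f, fun hle =>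
    map_notMem_torsion_of_finrank_eq_one hrk g hg hx (hle ⟨x, rfl⟩)⟩

end Torsion

section Chains

variable {I : Type*}

theorem rel_of_lt_of_forall_rel_succ {r : I → I → Prop} [IsTrans I r] {n : ℕ}
    {s : Fin n → I} (hs : ∀ k : Fin n, ∀ h : (k : ℕ) + 1 < n, r (s k) (s ⟨(k : ℕ) + 1, h⟩))
    {j l : Fin n} (hjl : j < l) : r (s j) (s l) := by
  obtain ⟨j, hj⟩ := j
  obtain ⟨l, hl⟩ := l
  rw [Fin.mk_lt_mk] at hjl
  induction l, hjl using Nat.le_induction with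
  | base => exact hs ⟨j, hj⟩ hl
  | succ l hjl ih => exact _root_.trans (ih (by omega)) (hs ⟨l, by omega⟩ hl)

/-- A long enough chain meets the finite set `S` in at most `#S` places; the remaining entries
still form a chain by transitivity. -/
theorem exists_chain_avoiding {r : I → I → Prop} [IsTrans I r]
    (h : ∀ n : ℕ, ∃ s : Fin n → I, Function.Injective s ∧
      ∀ k : Fin n, ∀ h : (k : ℕ) + 1 < n, r (s k) (s ⟨(k : ℕ) + 1, h⟩))
    (S : Finset I) (n : ℕ) :
    ∃ t : Fin n → I, Function.Injective t ∧ (∀ j l, j < l → r (t j) (t l)) ∧ ∀ k, t k ∉ S := by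
  classical
  obtain ⟨s, hs, hsr⟩ := h (n + S.card)
  have hhit : (Finset.univ.filter fun k => s k ∈ S).card ≤ S.card :=
    Finset.card_le_card_of_injOn s (fun k hk => (Finset.mem_filter.1 hk).2) hs.injOn
  have hmiss : n ≤ (Finset.univ.filter fun k => s k ∉ S).card := by
    have := Finset.card_filter_add_card_filter_not (s := Finset.univ) (fun k => s k ∈ S)
    rw [Finset.card_univ, Fintype.card_fin] at this
    omega
  obtain ⟨P, hP, hPcard⟩ := Finset.exists_subset_card_eq hmiss
  let e := P.orderEmbOfFin hPcard
  refine ⟨s ∘ e, hs.comp e.injective, fun j l hjl => ?_, fun k => ?_⟩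
  · exact rel_of_lt_of_forall_rel_succ hsr (e.strictMono hjl)
  · exact (Finset.mem_filter.1 (hP (P.orderEmbOfFin_mem hPcard k))).2

theorem exists_injective_sigma_of_forall_avoiding {ι : ℕ → Type*} [∀ n, Fintype (ι n)]
    {Q : ∀ n, (ι n → I) → Prop}
    (h : ∀ (S : Finset I) (n : ℕ), ∃ t : ι n → I, Function.Injective t ∧ Q n t ∧ ∀ k, t k ∉ S) :
    ∃ v : (Σ n, ι n) → I, Function.Injective v ∧ ∀ n, Q n fun k => v ⟨n, k⟩ := by
  classical
  choose pick hpick_inj hpick_Q hpick_avoid using h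
  let U : ℕ → Finset I := fun n => Nat.rec ∅ (fun m S => S ∪ Finset.univ.image (pick S m)) n
  have hU_mono : Monotone U := monotone_nat_of_le_succ fun m => Finset.subset_union_left
  have hmem : ∀ {m n}, m < n → ∀ k, pick (U m) m k ∈ U n := fun hmn k =>
    hU_mono hmn (Finset.mem_union_right _ (Finset.mem_image_of_mem _ (Finset.mem_univ k)))
  refine ⟨fun p => pick (U p.1) p.1 p.2, ?_, fun n => hpick_Q (U n) n⟩
  rintro ⟨m, k⟩ ⟨n, l⟩ (hkl : pick (U m) m k = pick (U n) n l)
  rcases lt_trichotomy m n with hmn | rfl | hnm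
  · exact absurd (hkl ▸ hmem hmn k) (hpick_avoid _ n l)
  · rw [hpick_inj _ m hkl]
  · exact absurd (hkl ▸ hmem hnm l) (hpick_avoid _ m k)

end Chains

theorem Function.Injective.exists_dependent_extend {J I : Type*} {β : I → Type*} {s : J → I}
    (hs : Function.Injective s) (g : ∀ j, β (s j)) (d : ∀ i, β i) :
    ∃ G : ∀ i, β i, (∀ j, G (s j) = g j) ∧ ∀ i ∉ Set.range s, G i = d i := by
  classical
  refine ⟨fun i => if h : ∃ j, s j = i then h.choose_spec ▸ g h.choose else d i,
    fun j => ?_, fun i hi => dif_neg hi⟩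
  have hcast : ∀ j' (e : s j' = s j), (e ▸ g j' : β (s j)) = g j := by
    intro j' e
    obtain rfl := hs e
    rfl
  exact (dif_pos ⟨j, rfl⟩).trans (hcast _ _)

namespace DirectSum

variable {I J : Type*} [DecidableEq I] (A : I → Type*) [∀ i, AddCommGroup (A i)]

theorem exists_end_of_injective {s t : J → I} (hs : Function.Injective s)
    (g : ∀ j, A (s j) →+ A (t j)) :
    ∃ φ : AddMonoid.End (⨁ i, A i), (∀ j x, φ (of A (s j) x) = of A (t j) (g j x)) ∧
      ∀ i ∉ Set.range s, ∀ x, φ (of A i x) = 0 := by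
  obtain ⟨ψ, hψ, hψ₀⟩ := hs.exists_dependent_extend (β := fun i => A i →+ ⨁ i, A i)
    (fun j => (of A (t j)).comp (g j)) 0
  refine ⟨toAddMonoid ψ, fun j x => (toAddMonoid_of ψ _ x).trans ?_,
    fun i hi x => (toAddMonoid_of ψ i x).trans ?_⟩
  · rw [hψ, AddMonoidHom.comp_apply]
  · rw [hψ₀ i hi, Pi.zero_apply, AddMonoidHom.zero_apply]

theorem exists_pow_apply_of_notMem_torsion (hrk : ∀ i, Module.finrank ℚ (ℚ ⊗[ℤ] A i) = 1)
    (φ : AddMonoid.End (⨁ i, A i)) {m : ℕ} (c : Fin (m + 1) → I)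
    (g : ∀ k : Fin m, A (c k.castSucc) →+ A (c k.succ))
    (hg : ∀ k, ¬ (g k).range ≤ AddCommGroup.torsion (A (c k.succ)))
    (hφ : ∀ k x, φ (of A (c k.castSucc) x) = of A (c k.succ) (g k x))
    {x : A (c 0)} (hx : x ∉ AddCommGroup.torsion (A (c 0))) (k : Fin (m + 1)) :
    ∃ y ∉ AddCommGroup.torsion (A (c k)), (φ ^ (k : ℕ)) (of A (c 0) x) = of A (c k) y := by
  induction k using Fin.induction with
  | zero => exact ⟨x, hx, rfl⟩
  | succ k ih =>
    obtain ⟨y, hy, hxy⟩ := ih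
    refine ⟨g k y, map_notMem_torsion_of_finrank_eq_one (hrk _) (g k) (hg k) hy, ?_⟩
    rw [Fin.val_succ, pow_succ', AddMonoid.End.coe_mul, Function.comp_apply,
      ← Fin.val_castSucc, hxy, hφ]

end DirectSum

theorem exists_disjoint_walkLE_chains {I : Type*} (A : I → Type*) [∀ i, AddCommGroup (A i)]
    (hrk : ∀ i, Module.finrank ℚ (ℚ ⊗[ℤ] A i) = 1)
    (hchain : ∀ n : ℕ, ∃ s : Fin n → I, Function.Injective s ∧
      ∀ k : Fin n, ∀ h : (k : ℕ) + 1 < n, WalkLE (A (s k)) (A (s ⟨(k : ℕ) + 1, h⟩))) :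
    ∃ v : (Σ n, Fin (n + 2)) → I, Function.Injective v ∧
      ∀ n, ∀ k : Fin (n + 1), WalkLE (A (v ⟨n, k.castSucc⟩)) (A (v ⟨n, k.succ⟩)) := by
  have : IsTrans I fun i j => WalkLE (A i) (A j) := ⟨fun _ j _ => WalkLE.trans (hrk j)⟩
  refine exists_injective_sigma_of_forall_avoiding
    (Q := fun n c => ∀ k : Fin (n + 1), WalkLE (A (c k.castSucc)) (A (c k.succ))) fun S n => ?_
  obtain ⟨t, ht, htr, htS⟩ :=
    exists_chain_avoiding (r := fun i j => WalkLE (A i) (A j)) hchain S (n + 2)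
  exact ⟨t, ht, fun k => htr _ _ k.castSucc_lt_succ, htS⟩

theorem not_stronglyHopfian_of_forall_exists_pow {G : Type*} [AddCommGroup G]
    (φ : AddMonoid.End G) (h : ∀ N : ℕ, ∃ e : G, (φ ^ (N + 1)) e ≠ 0 ∧ (φ ^ (N + 2)) e = 0) :
    ¬ StronglyHopfian G := by
  intro hG
  obtain ⟨N, hN⟩ := hG φ
  obtain ⟨e, he₁, he₂⟩ := h N
  have hker : e ∈ AddMonoidHom.ker (φ ^ (N + 1) : G →+ G) := by
    rw [hN (N + 1) (by omega), ← hN (N + 2) (by omega)]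
    exact he₂
  exact he₁ hker

theorem stmt17 {I : Type*} (A : I → Type*) [∀ i, AddCommGroup (A i)]
    (hrk : ∀ i, Module.finrank ℚ (ℚ ⊗[ℤ] A i) = 1)
    (hchain : ∀ n : ℕ, ∃ s : Fin n → I, Function.Injective s ∧
      ∀ k : Fin n, ∀ h : (k : ℕ) + 1 < n, WalkLE (A (s k)) (A (s ⟨(k : ℕ) + 1, h⟩))) :
    ¬ StronglyHopfian (⨁ i, A i) := by
  classical
  obtain ⟨v, hv, hlink⟩ := exists_disjoint_walkLE_chains A hrk hchain
  choose g hg using hlink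
  let src : (Σ n, Fin (n + 1)) → I := fun p => v ⟨p.1, p.2.castSucc⟩
  obtain ⟨φ, hφ, hφ₀⟩ := DirectSum.exists_end_of_injective A (s := src)
    (hv.comp (f := Sigma.map id fun _ => Fin.castSucc)
      (Function.injective_id.sigma_map fun _ => Fin.castSucc_injective _))
    fun p => g p.1 p.2
  have hend : ∀ N, v ⟨N, Fin.last (N + 1)⟩ ∉ Set.range src := by
    rintro N ⟨⟨n, k⟩, h⟩
    obtain ⟨rfl, hk⟩ := Sigma.mk.inj_iff.1 (hv h)
    exact Fin.castSucc_ne_last k (heq_iff_eq.1 hk)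
  refine not_stronglyHopfian_of_forall_exists_pow φ fun N => ?_
  obtain ⟨x, hx⟩ := WalkLE.exists_notMem_torsion ⟨g N 0, hg N 0⟩
  obtain ⟨y, hy, hxy⟩ := DirectSum.exists_pow_apply_of_notMem_torsion A hrk φ (fun k => v ⟨N, k⟩)
    (g N) (hg N) (fun k => hφ ⟨N, k⟩) hx (Fin.last (N + 1))
  replace hxy : (φ ^ (N + 1)) (DirectSum.of A (v ⟨N, 0⟩) x) = DirectSum.of A _ y := hxy
  refine ⟨DirectSum.of A (v ⟨N, 0⟩) x, ?_, ?_⟩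
  · rw [hxy, map_ne_zero_iff _ (DirectSum.of_injective _)]
    exact fun hy₀ => hy (hy₀ ▸ zero_mem _)
  · rw [pow_succ', AddMonoid.End.coe_mul, Function.comp_apply, hxy, hφ₀ _ (hend N)]
end

section
/- Let G and G' be abelian groups of torsion-free rank 1 with torsion subgroups T, T'. If G ⊕ B ≅ G' ⊕ B' for some torsion groups B, B', then there exist homomorphisms φ: G → G' and φ': G' → G with φ(G) ⊄ T' and φ'(G') ⊄ T (i.e., G and G' have the same WALK-type). -/
open scoped TensorProduct

lemma torsion_subsingleton {G : Type*} [AddCommGroup G]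
    (h : ∀ g : G, IsOfFinAddOrder g) : Subsingleton (ℚ ⊗[ℤ] G) := by
  constructor
  suffices hz : ∀ z : ℚ ⊗[ℤ] G, z = 0 by intro x y; rw [hz x, hz y]
  intro z
  induction z using TensorProduct.induction_on with
  | zero => rfl
  | tmul q g =>
      have hn : 0 < addOrderOf g := (h g).addOrderOf_pos
      have hng : (addOrderOf g : ℤ) • g = 0 := by
        rw [natCast_zsmul, addOrderOf_nsmul_eq_zero]
      have key : (q / (addOrderOf g : ℚ)) ⊗ₜ[ℤ] ((addOrderOf g : ℤ) • g)
          = q ⊗ₜ[ℤ] g := by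
        rw [TensorProduct.tmul_smul, TensorProduct.smul_tmul', zsmul_eq_mul]
        congr 1
        push_cast
        field_simp
      rw [← key, hng, TensorProduct.tmul_zero]
  | add x y hx hy => rw [hx, hy, add_zero]

lemma aux_dir {G G' B B' : Type*} [AddCommGroup G] [AddCommGroup G']
    [AddCommGroup B] [AddCommGroup B']
    (hrk : Module.finrank ℚ (ℚ ⊗[ℤ] G) = 1)
    (hB' : AddMonoid.IsTorsion B') (e : (G × B) ≃+ (G' × B')) :
    ∃ φ : G →+ G', ¬ φ.range ≤ AddCommGroup.torsion G' := by
  refine ⟨(AddMonoidHom.fst G' B').comp (e.toAddMonoidHom.comp (AddMonoidHom.inl G B)), ?_⟩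
  intro hle
  have htors : ∀ g : G, IsOfFinAddOrder g := by
    intro g
    have h1 : IsOfFinAddOrder (e (g, 0)).1 := hle ⟨g, rfl⟩
    have h2 : IsOfFinAddOrder (e (g, 0)).2 := hB' _
    have h3 : IsOfFinAddOrder (e (g, 0)) := by
      have := IsOfFinAddOrder.prod_mk h1 h2
      simpa using this
    have h4 : IsOfFinAddOrder ((g, 0) : G × B) := by
      have := e.symm.toAddMonoidHom.isOfFinAddOrder h3
      simpa using this
    exact h4.fst
  have := torsion_subsingleton htors
  rw [Module.finrank_zero_of_subsingleton] at hrk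
  exact one_ne_zero hrk.symm

theorem stmt19 {G G' B B' : Type*} [AddCommGroup G] [AddCommGroup G']
    [AddCommGroup B] [AddCommGroup B']
    (hrk : Module.finrank ℚ (ℚ ⊗[ℤ] G) = 1)
    (hrk' : Module.finrank ℚ (ℚ ⊗[ℤ] G') = 1)
    (hB : AddMonoid.IsTorsion B) (hB' : AddMonoid.IsTorsion B')
    (e : (G × B) ≃+ (G' × B')) :
    (∃ φ : G →+ G', ¬ φ.range ≤ AddCommGroup.torsion G') ∧
    (∃ φ' : G' →+ G, ¬ φ'.range ≤ AddCommGroup.torsion G) := by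
  exact ⟨aux_dir hrk hB' e, aux_dir hrk' hB e.symm⟩
end
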